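/- arXiv:1201.3119 — 5 statements merged into one kernel-verified Lean document; each statement's English description precedes it below -/
import Mathlib

section
/- Let σ and σ' be two exceptional permutations with |σ| ≤ |σ'|. Then σ is a pattern of σ' if and only if σ and σ' are exceptional permutations of the same type. -/
open Equiv Filter Asymptotics

/-- `π` (of size `k`) is a pattern of `σ` (of size `n`): there is a strictly increasing
sequence of positions of `σ` whose values are order-isomorphic to `π`. -/
def IsPattern {k n : ℕ} (π : Equiv.Perm (Fin k)) (σ : Equiv.Perm (Fin n)) : Prop :=
  ∃ f : Fin k ↪o Fin n, ∀ i j : Fin k, π i < π j ↔ σ (f i) < σ (f j)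

/-- A set of positions is consecutive (an integer interval). -/
def IsConsecutive {n : ℕ} (s : Finset (Fin n)) : Prop :=
  ∀ ⦃i j k : Fin n⦄, i ∈ s → k ∈ s → i ≤ j → j ≤ k → j ∈ s

/-- An interval of a permutation: a consecutive set of positions whose image is
a consecutive set of values. -/
def IsPermInterval {n : ℕ} (σ : Equiv.Perm (Fin n)) (s : Finset (Fin n)) : Prop :=
  IsConsecutive s ∧ IsConsecutive (s.image σ)

/-- A permutation is simple if its only intervals are the trivial ones. -/
def IsSimple {n : ℕ} (σ : Equiv.Perm (Fin n)) : Prop :=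
  ∀ s : Finset (Fin n), IsPermInterval σ s → s.card ≤ 1 ∨ s = Finset.univ

/-- Value at (0-indexed) position `i` of the exceptional permutation of size `2*m`
of type `t` (0-indexed types: paper's types 1,2,3,4 are `t = 0,1,2,3`). -/
def exceptionalValue (t : Fin 4) (m i : ℕ) : ℕ :=
  if t = 0 then (if i < m then 2 * i + 1 else 2 * (i - m))
  else if t = 1 then (if i < m then 2 * (m - i - 1) else 2 * (2 * m - i) - 1)
  else if t = 2 then (if i % 2 = 0 then m + i / 2 else i / 2)
  else (if i % 2 = 0 then m - i / 2 - 1 else 2 * m - i / 2 - 1)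

/-- `σ` is the exceptional permutation of type `t` (of its size). -/
def IsExceptionalOfType {n : ℕ} (t : Fin 4) (σ : Equiv.Perm (Fin n)) : Prop :=
  ∃ m : ℕ, 2 ≤ m ∧ n = 2 * m ∧ ∀ i : Fin n, (σ i : ℕ) = exceptionalValue t m (i : ℕ)

/-- `σ` is exceptional. -/
def IsExceptional {n : ℕ} (σ : Equiv.Perm (Fin n)) : Prop :=
  ∃ t : Fin 4, IsExceptionalOfType t σ

/-- `τ` is the permutation obtained from `σ` by deleting the point at position `i`
(and renormalizing). -/
def IsDeletion {n : ℕ} (σ : Equiv.Perm (Fin (n + 1))) (i : Fin (n + 1))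
    (τ : Equiv.Perm (Fin n)) : Prop :=
  ∀ j k : Fin n, τ j < τ k ↔ σ (i.succAbove j) < σ (i.succAbove k)

/-- The permutation 2413. -/
def p2413 : Equiv.Perm (Fin 4) := ⟨![1, 3, 0, 2], ![2, 0, 3, 1], by decide, by decide⟩

/-- The permutation 3142. -/
def p3142 : Equiv.Perm (Fin 4) := ⟨![2, 0, 3, 1], ![1, 3, 0, 2], by decide, by decide⟩

/-- The number of simple permutations of size `n`. -/
noncomputable def simpleCount (n : ℕ) : ℕ :=
  Nat.card {σ : Equiv.Perm (Fin n) // IsSimple σ}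

/-- The average outdegree `D_n = s_{n-1} · n(n-4) / s_n`. -/
noncomputable def avgOutdeg (n : ℕ) : ℝ :=
  (simpleCount (n - 1) : ℝ) * ((n : ℝ) * ((n : ℝ) - 4)) / (simpleCount n : ℝ)

/-- The outdegree of a permutation: the number of positions whose deletion
yields a simple permutation. -/
noncomputable def outdeg : ∀ {n : ℕ}, Equiv.Perm (Fin n) → ℕ
  | 0, _ => 0
  | _ + 1, σ =>
    Nat.card {i // ∃ τ, IsDeletion σ i τ ∧ IsSimple τ}

/-- `S_n^k`: the number of simple permutations of size `n` with outdegree `k`. -/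
noncomputable def outdegCount (n k : ℕ) : ℕ :=
  Nat.card {σ : Equiv.Perm (Fin n) // IsSimple σ ∧ outdeg σ = k}


section ExceptionalAux

open Equiv

-- Unfolding lemmas for `exceptionalValue` at each fixed type.
lemma ev0 (m i : ℕ) : exceptionalValue 0 m i = if i < m then 2*i+1 else 2*(i-m) := rfl
lemma ev1 (m i : ℕ) : exceptionalValue 1 m i = if i < m then 2*(m-i-1) else 2*(2*m-i)-1 := rfl
lemma ev2 (m i : ℕ) : exceptionalValue 2 m i = if i % 2 = 0 then m + i/2 else i/2 := rfl
lemma ev3 (m i : ℕ) : exceptionalValue 3 m i = if i % 2 = 0 then m - i/2 - 1 else 2*m - i/2 - 1 := rfl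

/-- A 2413-configuration. -/
def Has2413' {n : ℕ} (σ : Equiv.Perm (Fin n)) : Prop :=
  ∃ p q r s : Fin n, p < q ∧ q < r ∧ r < s ∧ σ r < σ p ∧ σ p < σ s ∧ σ s < σ q
/-- A 3142-configuration. -/
def Has3142' {n : ℕ} (σ : Equiv.Perm (Fin n)) : Prop :=
  ∃ p q r s : Fin n, p < q ∧ q < r ∧ r < s ∧ σ q < σ s ∧ σ s < σ p ∧ σ p < σ r
/-- An increasing triple. -/
def HasInc3' {n : ℕ} (σ : Equiv.Perm (Fin n)) : Prop :=
  ∃ p q r : Fin n, p < q ∧ q < r ∧ σ p < σ q ∧ σ q < σ r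
/-- A decreasing triple. -/
def HasDec3' {n : ℕ} (σ : Equiv.Perm (Fin n)) : Prop :=
  ∃ p q r : Fin n, p < q ∧ q < r ∧ σ q < σ p ∧ σ r < σ q

lemma IsPattern.has2413 {k n : ℕ} {σ : Perm (Fin k)} {σ' : Perm (Fin n)}
    (h : IsPattern σ σ') (hc : Has2413' σ) : Has2413' σ' := by
  obtain ⟨f, hf⟩ := h
  obtain ⟨p,q,r,s,h1,h2,h3,h4,h5,h6⟩ := hc
  exact ⟨f p, f q, f r, f s, f.strictMono h1, f.strictMono h2, f.strictMono h3,
    (hf _ _).1 h4, (hf _ _).1 h5, (hf _ _).1 h6⟩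
lemma IsPattern.has3142 {k n : ℕ} {σ : Perm (Fin k)} {σ' : Perm (Fin n)}
    (h : IsPattern σ σ') (hc : Has3142' σ) : Has3142' σ' := by
  obtain ⟨f, hf⟩ := h
  obtain ⟨p,q,r,s,h1,h2,h3,h4,h5,h6⟩ := hc
  exact ⟨f p, f q, f r, f s, f.strictMono h1, f.strictMono h2, f.strictMono h3,
    (hf _ _).1 h4, (hf _ _).1 h5, (hf _ _).1 h6⟩
lemma IsPattern.hasInc3 {k n : ℕ} {σ : Perm (Fin k)} {σ' : Perm (Fin n)}
    (h : IsPattern σ σ') (hc : HasInc3' σ) : HasInc3' σ' := by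
  obtain ⟨f, hf⟩ := h
  obtain ⟨p,q,r,h1,h2,h3,h4⟩ := hc
  exact ⟨f p, f q, f r, f.strictMono h1, f.strictMono h2, (hf _ _).1 h3, (hf _ _).1 h4⟩
lemma IsPattern.hasDec3 {k n : ℕ} {σ : Perm (Fin k)} {σ' : Perm (Fin n)}
    (h : IsPattern σ σ') (hc : HasDec3' σ) : HasDec3' σ' := by
  obtain ⟨f, hf⟩ := h
  obtain ⟨p,q,r,h1,h2,h3,h4⟩ := hc
  exact ⟨f p, f q, f r, f.strictMono h1, f.strictMono h2, (hf _ _).1 h3, (hf _ _).1 h4⟩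

-- Avoidance lemmas.
lemma avoid0_3142 {n m : ℕ} (hn : n = 2*m) {σ : Perm (Fin n)}
    (h : ∀ i : Fin n, (σ i : ℕ) = exceptionalValue 0 m (i : ℕ)) : ¬ Has3142' σ := by
  rintro ⟨p,q,r,s,h1,h2,h3,h4,h5,h6⟩
  rw [Fin.lt_def] at h1 h2 h3 h4 h5 h6
  rw [h p, h q, h r, h s] at *
  have := p.isLt; have := q.isLt; have := r.isLt; have := s.isLt
  simp only [ev0] at h4 h5 h6
  split_ifs at h4 h5 h6 <;> omega
lemma avoid0_dec3 {n m : ℕ} (hn : n = 2*m) {σ : Perm (Fin n)}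
    (h : ∀ i : Fin n, (σ i : ℕ) = exceptionalValue 0 m (i : ℕ)) : ¬ HasDec3' σ := by
  rintro ⟨p,q,r,h1,h2,h3,h4⟩
  rw [Fin.lt_def] at h1 h2 h3 h4
  rw [h p, h q, h r] at *
  have := p.isLt; have := q.isLt; have := r.isLt
  simp only [ev0] at h3 h4
  split_ifs at h3 h4 <;> omega
lemma avoid1_2413 {n m : ℕ} (hn : n = 2*m) {σ : Perm (Fin n)}
    (h : ∀ i : Fin n, (σ i : ℕ) = exceptionalValue 1 m (i : ℕ)) : ¬ Has2413' σ := by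
  rintro ⟨p,q,r,s,h1,h2,h3,h4,h5,h6⟩
  rw [Fin.lt_def] at h1 h2 h3 h4 h5 h6
  rw [h p, h q, h r, h s] at *
  have := p.isLt; have := q.isLt; have := r.isLt; have := s.isLt
  simp only [ev1] at h4 h5 h6
  split_ifs at h4 h5 h6 <;> omega
lemma avoid1_inc3 {n m : ℕ} (hn : n = 2*m) {σ : Perm (Fin n)}
    (h : ∀ i : Fin n, (σ i : ℕ) = exceptionalValue 1 m (i : ℕ)) : ¬ HasInc3' σ := by
  rintro ⟨p,q,r,h1,h2,h3,h4⟩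
  rw [Fin.lt_def] at h1 h2 h3 h4
  rw [h p, h q, h r] at *
  have := p.isLt; have := q.isLt; have := r.isLt
  simp only [ev1] at h3 h4
  split_ifs at h3 h4 <;> omega
lemma avoid2_2413 {n m : ℕ} (hn : n = 2*m) {σ : Perm (Fin n)}
    (h : ∀ i : Fin n, (σ i : ℕ) = exceptionalValue 2 m (i : ℕ)) : ¬ Has2413' σ := by
  rintro ⟨p,q,r,s,h1,h2,h3,h4,h5,h6⟩
  rw [Fin.lt_def] at h1 h2 h3 h4 h5 h6
  rw [h p, h q, h r, h s] at *
  have := p.isLt; have := q.isLt; have := r.isLt; have := s.isLt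
  simp only [ev2] at h4 h5 h6
  split_ifs at h4 h5 h6 <;> omega
lemma avoid2_dec3 {n m : ℕ} (hn : n = 2*m) {σ : Perm (Fin n)}
    (h : ∀ i : Fin n, (σ i : ℕ) = exceptionalValue 2 m (i : ℕ)) : ¬ HasDec3' σ := by
  rintro ⟨p,q,r,h1,h2,h3,h4⟩
  rw [Fin.lt_def] at h1 h2 h3 h4
  rw [h p, h q, h r] at *
  have := p.isLt; have := q.isLt; have := r.isLt
  simp only [ev2] at h3 h4
  split_ifs at h3 h4 <;> omega
lemma avoid3_3142 {n m : ℕ} (hn : n = 2*m) {σ : Perm (Fin n)}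
    (h : ∀ i : Fin n, (σ i : ℕ) = exceptionalValue 3 m (i : ℕ)) : ¬ Has3142' σ := by
  rintro ⟨p,q,r,s,h1,h2,h3,h4,h5,h6⟩
  rw [Fin.lt_def] at h1 h2 h3 h4 h5 h6
  rw [h p, h q, h r, h s] at *
  have := p.isLt; have := q.isLt; have := r.isLt; have := s.isLt
  simp only [ev3] at h4 h5 h6
  split_ifs at h4 h5 h6 <;> omega
lemma avoid3_inc3 {n m : ℕ} (hn : n = 2*m) {σ : Perm (Fin n)}
    (h : ∀ i : Fin n, (σ i : ℕ) = exceptionalValue 3 m (i : ℕ)) : ¬ HasInc3' σ := by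
  rintro ⟨p,q,r,h1,h2,h3,h4⟩
  rw [Fin.lt_def] at h1 h2 h3 h4
  rw [h p, h q, h r] at *
  have := p.isLt; have := q.isLt; have := r.isLt
  simp only [ev3] at h3 h4
  split_ifs at h3 h4 <;> omega

-- Containment lemmas.
lemma contains0_2413 {n m : ℕ} (hm : 2 ≤ m) (hn : n = 2*m) {σ : Perm (Fin n)}
    (h : ∀ i : Fin n, (σ i : ℕ) = exceptionalValue 0 m (i : ℕ)) : Has2413' σ := by
  refine ⟨⟨0, by omega⟩, ⟨m-1, by omega⟩, ⟨m, by omega⟩, ⟨m+1, by omega⟩, ?_,?_,?_,?_,?_,?_⟩ <;>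
    · simp only [Fin.lt_def, h, ev0]
      norm_num
      all_goals first | (split_ifs <;> omega) | omega
lemma contains3_2413 {n m : ℕ} (hm : 2 ≤ m) (hn : n = 2*m) {σ : Perm (Fin n)}
    (h : ∀ i : Fin n, (σ i : ℕ) = exceptionalValue 3 m (i : ℕ)) : Has2413' σ := by
  refine ⟨⟨0, by omega⟩, ⟨1, by omega⟩, ⟨2, by omega⟩, ⟨3, by omega⟩, ?_,?_,?_,?_,?_,?_⟩ <;>
    · simp only [Fin.lt_def, h, ev3]
      norm_num
      all_goals first | (split_ifs <;> omega) | omega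
lemma contains1_3142 {n m : ℕ} (hm : 2 ≤ m) (hn : n = 2*m) {σ : Perm (Fin n)}
    (h : ∀ i : Fin n, (σ i : ℕ) = exceptionalValue 1 m (i : ℕ)) : Has3142' σ := by
  refine ⟨⟨0, by omega⟩, ⟨m-1, by omega⟩, ⟨m, by omega⟩, ⟨m+1, by omega⟩, ?_,?_,?_,?_,?_,?_⟩ <;>
    · simp only [Fin.lt_def, h, ev1]
      norm_num
      all_goals first | (split_ifs <;> omega) | omega
lemma contains2_3142 {n m : ℕ} (hm : 2 ≤ m) (hn : n = 2*m) {σ : Perm (Fin n)}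
    (h : ∀ i : Fin n, (σ i : ℕ) = exceptionalValue 2 m (i : ℕ)) : Has3142' σ := by
  refine ⟨⟨0, by omega⟩, ⟨1, by omega⟩, ⟨2, by omega⟩, ⟨3, by omega⟩, ?_,?_,?_,?_,?_,?_⟩ <;>
    · simp only [Fin.lt_def, h, ev2]
      norm_num
      all_goals first | (split_ifs <;> omega) | omega
lemma contains0_inc3 {n m : ℕ} (hm : 3 ≤ m) (hn : n = 2*m) {σ : Perm (Fin n)}
    (h : ∀ i : Fin n, (σ i : ℕ) = exceptionalValue 0 m (i : ℕ)) : HasInc3' σ := by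
  refine ⟨⟨0, by omega⟩, ⟨1, by omega⟩, ⟨2, by omega⟩, ?_,?_,?_,?_⟩ <;>
    · simp only [Fin.lt_def, h, ev0]
      norm_num
      all_goals first | (split_ifs <;> omega) | omega
lemma contains2_inc3 {n m : ℕ} (hm : 3 ≤ m) (hn : n = 2*m) {σ : Perm (Fin n)}
    (h : ∀ i : Fin n, (σ i : ℕ) = exceptionalValue 2 m (i : ℕ)) : HasInc3' σ := by
  refine ⟨⟨1, by omega⟩, ⟨3, by omega⟩, ⟨5, by omega⟩, ?_,?_,?_,?_⟩ <;>
    · simp only [Fin.lt_def, h, ev2]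
      norm_num
      all_goals first | (split_ifs <;> omega) | omega
lemma contains1_dec3 {n m : ℕ} (hm : 3 ≤ m) (hn : n = 2*m) {σ : Perm (Fin n)}
    (h : ∀ i : Fin n, (σ i : ℕ) = exceptionalValue 1 m (i : ℕ)) : HasDec3' σ := by
  refine ⟨⟨0, by omega⟩, ⟨1, by omega⟩, ⟨2, by omega⟩, ?_,?_,?_,?_⟩ <;>
    · simp only [Fin.lt_def, h, ev1]
      norm_num
      all_goals first | (split_ifs <;> omega) | omega
lemma contains3_dec3 {n m : ℕ} (hm : 3 ≤ m) (hn : n = 2*m) {σ : Perm (Fin n)}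
    (h : ∀ i : Fin n, (σ i : ℕ) = exceptionalValue 3 m (i : ℕ)) : HasDec3' σ := by
  refine ⟨⟨0, by omega⟩, ⟨2, by omega⟩, ⟨4, by omega⟩, ?_,?_,?_,?_⟩ <;>
    · simp only [Fin.lt_def, h, ev3]
      norm_num
      all_goals first | (split_ifs <;> omega) | omega

/-- Building order embeddings of `Fin a` into `Fin b` from natural maps. -/
def finEmb {a b : ℕ} (g : ℕ → ℕ) (hlt : ∀ i, i < a → g i < b)
    (hmono : ∀ i j, i < j → j < a → g i < g j) : Fin a ↪o Fin b :=
  OrderEmbedding.ofStrictMono (fun i => ⟨g i, hlt i i.isLt⟩)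
    (fun i j hij => by exact hmono i j hij j.isLt)
lemma finEmb_val {a b : ℕ} (g : ℕ → ℕ) (hlt) (hmono) (i : Fin a) :
    ((finEmb (a := a) (b := b) g hlt hmono i : Fin b) : ℕ) = g i := rfl

/-- Backward direction: exceptionals of the same type are patterns of each other. -/
lemma pattern_same_type {a b : ℕ} {σ : Perm (Fin a)} {σ' : Perm (Fin b)} (t : Fin 4)
    (h1 : IsExceptionalOfType t σ) (h2 : IsExceptionalOfType t σ') (hab : a ≤ b) :
    IsPattern σ σ' := by
  obtain ⟨m, hm, hn, hv⟩ := h1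
  obtain ⟨m', hm', hn', hv'⟩ := h2
  have hmm : m ≤ m' := by omega
  fin_cases t
  · -- type 0
    replace hv : ∀ i : Fin a, (σ i : ℕ) = exceptionalValue 0 m (i : ℕ) := hv
    replace hv' : ∀ i : Fin b, (σ' i : ℕ) = exceptionalValue 0 m' (i : ℕ) := hv'
    refine ⟨finEmb (fun i => if i < m then i else i + (m' - m))
      (fun i hi => by beta_reduce; split_ifs <;> omega)
      (fun i j hij hj => by beta_reduce; split_ifs <;> omega), fun i j => ?_⟩
    have hi := i.isLt; have hj := j.isLt
    simp only [Fin.lt_def, hv, hv', finEmb_val, ev0]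
    split_ifs <;> omega
  · -- type 1
    replace hv : ∀ i : Fin a, (σ i : ℕ) = exceptionalValue 1 m (i : ℕ) := hv
    replace hv' : ∀ i : Fin b, (σ' i : ℕ) = exceptionalValue 1 m' (i : ℕ) := hv'
    refine ⟨finEmb (fun i => if i < m then i + (m' - m) else i + 2*(m' - m))
      (fun i hi => by beta_reduce; split_ifs <;> omega)
      (fun i j hij hj => by beta_reduce; split_ifs <;> omega), fun i j => ?_⟩
    have hi := i.isLt; have hj := j.isLt
    simp only [Fin.lt_def, hv, hv', finEmb_val, ev1]
    split_ifs <;> omega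
  · -- type 2
    replace hv : ∀ i : Fin a, (σ i : ℕ) = exceptionalValue 2 m (i : ℕ) := hv
    replace hv' : ∀ i : Fin b, (σ' i : ℕ) = exceptionalValue 2 m' (i : ℕ) := hv'
    refine ⟨finEmb (fun i => i) (fun i hi => by beta_reduce; omega)
      (fun i j hij hj => hij), fun i j => ?_⟩
    have hi := i.isLt; have hj := j.isLt
    simp only [Fin.lt_def, hv, hv', finEmb_val, ev2]
    split_ifs <;> omega
  · -- type 3
    replace hv : ∀ i : Fin a, (σ i : ℕ) = exceptionalValue 3 m (i : ℕ) := hv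
    replace hv' : ∀ i : Fin b, (σ' i : ℕ) = exceptionalValue 3 m' (i : ℕ) := hv'
    refine ⟨finEmb (fun i => i) (fun i hi => by beta_reduce; omega)
      (fun i j hij hj => hij), fun i j => ?_⟩
    have hi := i.isLt; have hj := j.isLt
    simp only [Fin.lt_def, hv, hv', finEmb_val, ev3]
    split_ifs <;> omega

lemma swap_of_ev {n m : ℕ} {σ : Perm (Fin n)} {t t' : Fin 4} (hm : 2 ≤ m) (hn : n = 2*m)
    (h : ∀ i : Fin n, (σ i : ℕ) = exceptionalValue t m (i : ℕ))
    (he : ∀ i : ℕ, i < n → exceptionalValue t m i = exceptionalValue t' m i) :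
    IsExceptionalOfType t' σ :=
  ⟨m, hm, hn, fun i => by rw [h i, he i i.isLt]⟩

lemma ev03 (i : ℕ) (hi : i < 4) : exceptionalValue 0 2 i = exceptionalValue 3 2 i := by
  rw [ev0, ev3]; split_ifs <;> omega
lemma ev12 (i : ℕ) (hi : i < 4) : exceptionalValue 1 2 i = exceptionalValue 2 2 i := by
  rw [ev1, ev2]; split_ifs <;> omega

end ExceptionalAux

/-- Let `σ` and `σ'` be two exceptional permutations with `|σ| ≤ |σ'|`.
Then `σ` is a pattern of `σ'` iff `σ` and `σ'` are exceptional of the same type. -/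
theorem exceptional_pattern_iff_same_type {a b : ℕ}
    (σ : Equiv.Perm (Fin a)) (σ' : Equiv.Perm (Fin b))
    (hσ : IsExceptional σ) (hσ' : IsExceptional σ') (hab : a ≤ b) :
    IsPattern σ σ' ↔ ∃ t : Fin 4, IsExceptionalOfType t σ ∧ IsExceptionalOfType t σ' := by
  obtain ⟨t, m, hm, hn, hv⟩ := hσ
  obtain ⟨t', m', hm', hn', hv'⟩ := hσ'
  constructor
  · intro hp
    fin_cases t <;> fin_cases t'
    · exact ⟨0, ⟨m, hm, hn, hv⟩, ⟨m', hm', hn', hv'⟩⟩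
    · exact absurd (hp.has2413 (contains0_2413 hm hn hv)) (avoid1_2413 hn' hv')
    · exact absurd (hp.has2413 (contains0_2413 hm hn hv)) (avoid2_2413 hn' hv')
    · rcases Nat.lt_or_ge m 3 with h3 | h3
      · refine ⟨3, swap_of_ev hm hn hv ?_, ⟨m', hm', hn', hv'⟩⟩
        have hm2 : m = 2 := by omega
        subst hm2
        exact fun i hi => ev03 i (by omega)
      · exact absurd (hp.hasInc3 (contains0_inc3 h3 hn hv)) (avoid3_inc3 hn' hv')
    · exact absurd (hp.has3142 (contains1_3142 hm hn hv)) (avoid0_3142 hn' hv')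
    · exact ⟨1, ⟨m, hm, hn, hv⟩, ⟨m', hm', hn', hv'⟩⟩
    · rcases Nat.lt_or_ge m 3 with h3 | h3
      · refine ⟨2, swap_of_ev hm hn hv ?_, ⟨m', hm', hn', hv'⟩⟩
        have hm2 : m = 2 := by omega
        subst hm2
        exact fun i hi => ev12 i (by omega)
      · exact absurd (hp.hasDec3 (contains1_dec3 h3 hn hv)) (avoid2_dec3 hn' hv')
    · exact absurd (hp.has3142 (contains1_3142 hm hn hv)) (avoid3_3142 hn' hv')
    · exact absurd (hp.has3142 (contains2_3142 hm hn hv)) (avoid0_3142 hn' hv')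
    · rcases Nat.lt_or_ge m 3 with h3 | h3
      · refine ⟨1, swap_of_ev hm hn hv ?_, ⟨m', hm', hn', hv'⟩⟩
        have hm2 : m = 2 := by omega
        subst hm2
        exact fun i hi => (ev12 i (by omega)).symm
      · exact absurd (hp.hasInc3 (contains2_inc3 h3 hn hv)) (avoid1_inc3 hn' hv')
    · exact ⟨2, ⟨m, hm, hn, hv⟩, ⟨m', hm', hn', hv'⟩⟩
    · exact absurd (hp.has3142 (contains2_3142 hm hn hv)) (avoid3_3142 hn' hv')
    · rcases Nat.lt_or_ge m 3 with h3 | h3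
      · refine ⟨0, swap_of_ev hm hn hv ?_, ⟨m', hm', hn', hv'⟩⟩
        have hm2 : m = 2 := by omega
        subst hm2
        exact fun i hi => (ev03 i (by omega)).symm
      · exact absurd (hp.hasDec3 (contains3_dec3 h3 hn hv)) (avoid0_dec3 hn' hv')
    · exact absurd (hp.has2413 (contains3_2413 hm hn hv)) (avoid1_2413 hn' hv')
    · exact absurd (hp.has2413 (contains3_2413 hm hn hv)) (avoid2_2413 hn' hv')
    · exact ⟨3, ⟨m, hm, hn, hv⟩, ⟨m', hm', hn', hv'⟩⟩
  · rintro ⟨t'', h1, h2⟩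
    exact pattern_same_type t'' h1 h2 hab
end

section
/- Let σ be a simple permutation with |σ| ≥ 4. Then either 2413 or 3142 is a pattern of σ. -/
open Equiv Filter Asymptotics

/-!
By Seinsche's theorem, the inversion graph `G` of `σ` is disconnected, or `Gᶜ` is disconnected,
or `G` has an induced path on four vertices. Non-adjacency in `G` and in `Gᶜ` is transitive
along positions and along values, so the connected components of both graphs are intervals of
`σ`. If `σ` is simple, this forces `G` or `Gᶜ` to be edgeless, so `σ` is increasing or
decreasing, and then the first two positions form a nontrivial interval. An induced path on
four vertices in the inversion graph spans a copy of `2413` or `3142`.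
-/

namespace SimpleGraph

variable {V : Type*} (G : SimpleGraph V)

def HasInducedP4 (S : Finset V) : Prop :=
  ∃ x ∈ S, ∃ y ∈ S, ∃ z ∈ S, ∃ w ∈ S,
    G.Adj x y ∧ G.Adj y z ∧ G.Adj z w ∧ ¬G.Adj x z ∧ ¬G.Adj x w ∧ ¬G.Adj y w

def NonadjTransAlong {α : Type*} [LT α] (f : V → α) : Prop :=
  ∀ ⦃c j d⦄, f c < f j → f j < f d → ¬G.Adj c j → ¬G.Adj j d → ¬G.Adj c d

/-- `G` induces a disconnected graph on `S`. -/
def IsSplit [DecidableEq V] (S : Finset V) : Prop :=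
  ∃ A B : Finset V, A.Nonempty ∧ B.Nonempty ∧ Disjoint A B ∧ A ∪ B = S ∧
    ∀ a ∈ A, ∀ b ∈ B, ¬G.Adj a b

variable {G}

lemma HasInducedP4.mono {S T : Finset V} (h : G.HasInducedP4 S) (hST : S ⊆ T) :
    G.HasInducedP4 T := by
  obtain ⟨x, hx, y, hy, z, hz, w, hw, hP4⟩ := h
  exact ⟨x, hST hx, y, hST hy, z, hST hz, w, hST hw, hP4⟩

/-- The path on four vertices is self-complementary: `x - y - z - w` in `Gᶜ` gives
`z - x - w - y` in `G`. -/
lemma HasInducedP4.of_compl {S : Finset V} (h : Gᶜ.HasInducedP4 S) : G.HasInducedP4 S := by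
  obtain ⟨x, hx, y, hy, z, hz, w, hw, hxy, hyz, hzw, hxz, hxw, hyw⟩ := h
  have hxz' : x ≠ z := by rintro rfl; exact hxw hzw
  have hxw' : x ≠ w := by rintro rfl; exact hxz hzw.symm
  have hyw' : y ≠ w := by rintro rfl; exact hxw hxy
  simp only [compl_adj, not_and, not_not] at hxy hyz hzw hxz hxw hyw
  exact ⟨z, hz, x, hx, w, hw, y, hy, (hxz hxz').symm, hxw hxw', (hyw hyw').symm,
    hzw.2, fun h => hyz.2 h.symm, hxy.2⟩

/-- A walk from `c` to `d` has to cross the level of `j` along an edge, and that edge cannot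
avoid `j`. -/
lemma Reachable.of_between {α : Type*} [LinearOrder α] {f : V → α} (hf : Function.Injective f)
    (hG : G.NonadjTransAlong f) {c d j : V} (hcd : G.Reachable c d) (hcj : f c < f j)
    (hjd : f j < f d) : G.Reachable c j := by
  obtain ⟨p⟩ := hcd
  induction p with
  | nil => exact absurd (hcj.trans hjd) (lt_irrefl _)
  | @cons c c' d hcc' p ih =>
    rcases lt_trichotomy (f c') (f j) with h | h | h
    · exact hcc'.reachable.trans (ih h hjd)
    · exact hf h ▸ hcc'.reachable
    · by_cases hcj' : G.Adj c j
      · exact hcj'.reachable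
      by_cases hjc' : G.Adj j c'
      · exact hcc'.reachable.trans hjc'.symm.reachable
      exact absurd hcc' (hG hcj h hcj' hjc')

section Split

variable [DecidableEq V]

lemma IsSplit.not_preconnected [Fintype V] (h : G.IsSplit Finset.univ) : ¬G.Preconnected := by
  obtain ⟨A, B, ⟨a, ha⟩, ⟨b, hb⟩, hAB, hunion, hcross⟩ := h
  have hstay : ∀ {u v : V} (p : G.Walk u v), u ∈ A → v ∈ A := by
    intro u v p
    induction p with
    | nil => exact id
    | @cons u' v' _ huv _ ih =>
      intro hu
      refine ih ?_
      have hv : v' ∈ A ∪ B := hunion ▸ Finset.mem_univ _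
      exact (Finset.mem_union.1 hv).resolve_right fun hvB => hcross _ hu _ hvB huv
  intro hconn
  obtain ⟨p⟩ := hconn a b
  exact Finset.disjoint_left.1 hAB (hstay p ha) hb

/-- Either the non-neighbours of `v` in `A` are cut off from the rest, or an edge `x - y` of `A`
from a neighbour to a non-neighbour of `v` yields the induced path `y - x - v - b`. -/
lemma isSplit_or_hasInducedP4_insert {A B : Finset V} {v b u : V} (hvA : v ∉ A) (hvB : v ∉ B)
    (hAB : Disjoint A B) (hcross : ∀ a ∈ A, ∀ b ∈ B, ¬G.Adj a b)
    (hb : b ∈ B) (hvb : G.Adj v b) (hu : u ∈ A) (hvu : ¬G.Adj v u) :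
    G.IsSplit (insert v (A ∪ B)) ∨ G.HasInducedP4 (insert v (A ∪ B)) := by
  classical
  by_cases hpath : ∃ x ∈ A, ∃ y ∈ A, G.Adj v x ∧ ¬G.Adj v y ∧ G.Adj x y
  · obtain ⟨x, hx, y, hy, hvx, hvy, hxy⟩ := hpath
    right
    refine ⟨y, by simp [hy], x, by simp [hx], v, by simp, b, by simp [hb],
      hxy.symm, hvx.symm, hvb, fun h => hvy h.symm, hcross y hy b hb, hcross x hx b hb⟩
  · push Not at hpath
    left
    refine ⟨A.filter (¬G.Adj v ·), insert v (A.filter (G.Adj v ·) ∪ B),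
      ⟨u, Finset.mem_filter.2 ⟨hu, hvu⟩⟩, Finset.insert_nonempty _ _, ?_, ?_, ?_⟩
    · simp only [Finset.disjoint_left, Finset.mem_filter, Finset.mem_insert, Finset.mem_union]
      rintro t ⟨htA, hvt⟩ (rfl | ⟨-, hvt'⟩ | htB)
      exacts [hvA htA, hvt hvt', Finset.disjoint_left.1 hAB htA htB]
    · ext t
      simp only [Finset.mem_union, Finset.mem_insert, Finset.mem_filter]
      tauto
    · simp only [Finset.mem_filter, Finset.mem_insert, Finset.mem_union]
      rintro a ⟨haA, hva⟩ t (rfl | ⟨htA, hvt⟩ | htB)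
      exacts [fun h => hva h.symm, fun h => hpath t htA a haA hvt hva h.symm,
        hcross a haA t htB]

lemma IsSplit.insert_or {S : Finset V} (h : G.IsSplit S) {v : V} (hv : v ∉ S) :
    G.IsSplit (insert v S) ∨ Gᶜ.IsSplit (insert v S) ∨ G.HasInducedP4 (insert v S) := by
  obtain ⟨A, B, hA, hB, hAB, rfl, hcross⟩ := h
  have hvA : v ∉ A := fun h => hv (Finset.mem_union_left _ h)
  have hvB : v ∉ B := fun h => hv (Finset.mem_union_right _ h)
  by_cases hBv : ∀ b ∈ B, ¬G.Adj v b
  · refine .inl ⟨insert v A, B, Finset.insert_nonempty _ _, hB, ?_, Finset.insert_union .., ?_⟩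
    · exact Finset.disjoint_insert_left.2 ⟨hvB, hAB⟩
    · simp only [Finset.mem_insert]
      rintro a (rfl | ha)
      exacts [hBv, hcross a ha]
  by_cases hAv : ∀ a ∈ A, ¬G.Adj v a
  · refine .inl ⟨A, insert v B, hA, Finset.insert_nonempty _ _, ?_, Finset.union_insert .., ?_⟩
    · exact Finset.disjoint_insert_right.2 ⟨hvA, hAB⟩
    · simp only [Finset.mem_insert]
      rintro a ha t (rfl | ht)
      exacts [fun h => hAv a ha h.symm, hcross a ha t ht]
  push Not at hBv hAv
  obtain ⟨b, hb, hvb⟩ := hBv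
  obtain ⟨a, ha, hva⟩ := hAv
  by_cases hall : ∀ t ∈ A ∪ B, G.Adj v t
  · refine .inr <| .inl ⟨{v}, A ∪ B, Finset.singleton_nonempty _, ⟨a, by simp [ha]⟩,
      Finset.disjoint_singleton_left.2 hv, (Finset.insert_eq v _).symm, ?_⟩
    simp only [Finset.mem_singleton, compl_adj, not_and, not_not]
    rintro _ rfl t ht -
    exact hall t ht
  push Not at hall
  obtain ⟨u, hu, hvu⟩ := hall
  rcases Finset.mem_union.1 hu with huA | huB
  · exact (isSplit_or_hasInducedP4_insert hvA hvB hAB hcross hb hvb huA hvu).imp_right .inr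
  · rw [Finset.union_comm]
    exact (isSplit_or_hasInducedP4_insert hvB hvA hAB.symm
      (fun b hb a ha h => hcross a ha b hb h.symm) ha hva huB hvu).imp_right .inr

/-- Seinsche's theorem. -/
theorem isSplit_or_isSplit_compl_or_hasInducedP4 (S : Finset V) (hS : 2 ≤ S.card) :
    G.IsSplit S ∨ Gᶜ.IsSplit S ∨ G.HasInducedP4 S := by
  induction S using Finset.induction_on with
  | empty => simp at hS
  | @insert v S hv ih =>
    rcases le_or_gt 2 S.card with hS' | hS'
    · rcases ih hS' with h | h | h
      · exact h.insert_or hv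
      · rcases h.insert_or hv with h | h | h
        · exact .inr (.inl h)
        · exact .inl (by rwa [compl_compl] at h)
        · exact .inr (.inr h.of_compl)
      · exact .inr (.inr (h.mono (Finset.subset_insert _ _)))
    · rw [Finset.card_insert_of_notMem hv] at hS
      obtain ⟨u, rfl⟩ : ∃ u, S = {u} := Finset.card_eq_one.1 (by omega)
      have hvu : v ≠ u := by simpa using hv
      have hsplit : ∀ H : SimpleGraph V, ¬H.Adj v u → H.IsSplit {v, u} := fun H h =>
        ⟨{v}, {u}, Finset.singleton_nonempty _, Finset.singleton_nonempty _,
          Finset.disjoint_singleton.2 hvu, rfl, by simpa using h⟩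
      by_cases hadj : G.Adj v u
      · exact .inr (.inl (hsplit _ (by simp [hadj])))
      · exact .inl (hsplit _ hadj)

end Split

end SimpleGraph

section Inversions

variable {n : ℕ}

def inversionGraph (σ : Perm (Fin n)) : SimpleGraph (Fin n) where
  Adj a b := (a < b ∧ σ b < σ a) ∨ (b < a ∧ σ a < σ b)
  symm := ⟨fun _ _ => Or.symm⟩
  loopless := ⟨fun _ h => by omega⟩

variable {σ : Perm (Fin n)}

lemma inversionGraph_adj {a b : Fin n} :
    (inversionGraph σ).Adj a b ↔ (a < b ∧ σ b < σ a) ∨ (b < a ∧ σ a < σ b) :=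
  Iff.rfl

lemma nonadjTransAlong_id_inversionGraph : (inversionGraph σ).NonadjTransAlong id := by
  intro c j d
  simp only [id, inversionGraph_adj]
  omega

lemma nonadjTransAlong_inversionGraph : (inversionGraph σ).NonadjTransAlong σ := by
  intro c j d
  simp only [inversionGraph_adj]
  omega

lemma nonadjTransAlong_id_compl_inversionGraph : (inversionGraph σ)ᶜ.NonadjTransAlong id := by
  intro c j d (hcj : c < j) (hjd : j < d)
  have := σ.injective.ne (a₁ := c) (a₂ := d)
  simp only [SimpleGraph.compl_adj, inversionGraph_adj]
  omega

lemma nonadjTransAlong_compl_inversionGraph : (inversionGraph σ)ᶜ.NonadjTransAlong σ := by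
  intro c j d hcj hjd
  have : c ≠ d := by rintro rfl; exact lt_asymm hcj hjd
  simp only [SimpleGraph.compl_adj, inversionGraph_adj]
  omega

end Inversions

section Intervals

variable {n : ℕ} {σ : Perm (Fin n)}

lemma isPermInterval_of_forall_lt {s : Finset (Fin n)}
    (hpos : ∀ ⦃i j k⦄, i ∈ s → k ∈ s → i < j → j < k → j ∈ s)
    (hval : ∀ ⦃i j k⦄, i ∈ s → k ∈ s → σ i < σ j → σ j < σ k → j ∈ s) :
    IsPermInterval σ s := by
  refine ⟨fun i j k hi hk hij hjk => ?_, fun a b c ha hc hab hbc => ?_⟩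
  · rcases hij.eq_or_lt with rfl | hij
    · exact hi
    rcases hjk.eq_or_lt with rfl | hjk
    · exact hk
    exact hpos hi hk hij hjk
  · obtain ⟨i, hi, rfl⟩ := Finset.mem_image.1 ha
    obtain ⟨k, hk, rfl⟩ := Finset.mem_image.1 hc
    obtain ⟨j, rfl⟩ := σ.surjective b
    rcases hab.eq_or_lt with hij | hij
    · exact hij ▸ Finset.mem_image_of_mem σ hi
    rcases hbc.eq_or_lt with hjk | hjk
    · exact hjk ▸ Finset.mem_image_of_mem σ hk
    exact Finset.mem_image_of_mem σ (hval hi hk hij hjk)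

lemma isPermInterval_of_forall_mem_iff_reachable {G : SimpleGraph (Fin n)}
    (hpos : G.NonadjTransAlong id) (hval : G.NonadjTransAlong σ) {x : Fin n}
    {s : Finset (Fin n)} (hs : ∀ t, t ∈ s ↔ G.Reachable x t) : IsPermInterval σ s := by
  refine isPermInterval_of_forall_lt (fun i j k hi hk hij hjk => ?_) fun i j k hi hk hij hjk => ?_
  all_goals rw [hs] at hi hk ⊢
  · exact hi.trans ((hi.symm.trans hk).of_between Function.injective_id hpos hij hjk)
  · exact hi.trans ((hi.symm.trans hk).of_between σ.injective hval hij hjk)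

/-- The connected components are intervals, hence singletons when `G` is split. -/
lemma eq_bot_of_isSplit_univ (hσ : IsSimple σ) {G : SimpleGraph (Fin n)}
    (hpos : G.NonadjTransAlong id) (hval : G.NonadjTransAlong σ) (hG : G.IsSplit Finset.univ) :
    G = ⊥ := by
  classical
  refine SimpleGraph.eq_bot_iff_forall_not_adj.2 fun x y hxy => ?_
  have hs : ∀ t, t ∈ Finset.univ.filter (G.Reachable x) ↔ G.Reachable x t := by simp
  rcases hσ _ (isPermInterval_of_forall_mem_iff_reachable hpos hval hs) with hcard | huniv
  · exact hxy.ne (Finset.card_le_one.1 hcard x ((hs x).2 .rfl) y ((hs y).2 hxy.reachable))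
  · refine hG.not_preconnected fun a b => ?_
    have hreach : ∀ t, G.Reachable x t := fun t => (hs t).1 (huniv.symm ▸ Finset.mem_univ t)
    exact (hreach a).symm.trans (hreach b)

lemma not_isSimple_of_strictMono_or_strictAnti (hn : 3 ≤ n)
    (hσ : StrictMono σ ∨ StrictAnti σ) : ¬IsSimple σ := by
  intro hsimple
  have hpos : ∀ ⦃i j k : Fin n⦄, i ∈ Finset.Iic ⟨1, by omega⟩ →
      k ∈ Finset.Iic ⟨1, by omega⟩ → i < j → j < k → False := by
    simp only [Finset.mem_Iic, Fin.le_iff_val_le_val]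
    intro i j k hi hk hij hjk
    omega
  have hinterval : IsPermInterval σ (Finset.Iic ⟨1, by omega⟩) := by
    refine isPermInterval_of_forall_lt (fun i j k hi hk hij hjk => (hpos hi hk hij hjk).elim)
      fun i j k hi hk hij hjk => ?_
    rcases hσ with h | h
    · exact (hpos hi hk (h.lt_iff_lt.1 hij) (h.lt_iff_lt.1 hjk)).elim
    · exact (hpos hk hi (h.lt_iff_gt.1 hjk) (h.lt_iff_gt.1 hij)).elim
  rcases hsimple _ hinterval with hcard | huniv
  · simp at hcard
  · have := huniv ▸ Finset.mem_univ (⟨2, by omega⟩ : Fin n)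
    simp [Fin.le_def] at this

lemma strictMono_of_inversionGraph_eq_bot (h : inversionGraph σ = ⊥) : StrictMono σ := by
  intro a b hab
  have hnadj := SimpleGraph.eq_bot_iff_forall_not_adj.1 h a b
  have := σ.injective.ne hab.ne
  rw [inversionGraph_adj] at hnadj
  omega

lemma strictAnti_of_compl_inversionGraph_eq_bot (h : (inversionGraph σ)ᶜ = ⊥) :
    StrictAnti σ := by
  intro a b hab
  have hnadj := SimpleGraph.eq_bot_iff_forall_not_adj.1 h a b
  simp only [SimpleGraph.compl_adj, inversionGraph_adj, not_and, not_not] at hnadj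
  have := hnadj hab.ne
  omega

end Intervals

section Patterns

variable {n : ℕ} {σ : Perm (Fin n)}

lemma isPattern_of_strictMono {k : ℕ} {π : Perm (Fin k)} {q : Fin k → Fin n}
    (hq : StrictMono q) (hσq : StrictMono (σ ∘ q ∘ π.symm)) : IsPattern π σ :=
  ⟨OrderEmbedding.ofStrictMono q hq, fun i j => by
    simpa using (hσq.lt_iff_lt (a := π i) (b := π j)).symm⟩

lemma isPattern_p2413 {a b c d : Fin n} (hab : a < b) (hbc : b < c) (hcd : c < d)
    (hca : σ c < σ a) (had : σ a < σ d) (hdb : σ d < σ b) : IsPattern p2413 σ :=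
  isPattern_of_strictMono (q := ![a, b, c, d])
    (Fin.strictMono_iff_lt_succ.2 fun i => by fin_cases i <;> assumption)
    (Fin.strictMono_iff_lt_succ.2 fun i => by fin_cases i <;> assumption)

lemma isPattern_p3142 {a b c d : Fin n} (hab : a < b) (hbc : b < c) (hcd : c < d)
    (hbd : σ b < σ d) (hda : σ d < σ a) (hac : σ a < σ c) : IsPattern p3142 σ :=
  isPattern_of_strictMono (q := ![a, b, c, d])
    (Fin.strictMono_iff_lt_succ.2 fun i => by fin_cases i <;> assumption)
    (Fin.strictMono_iff_lt_succ.2 fun i => by fin_cases i <;> assumption)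

/-- Non-adjacency of `x, w` and `x < w` force `x < z`, `y < w`; then `x < y` gives
`x z y w ≅ 2413` and `y < x` gives `y x w z ≅ 3142`. -/
lemma isPattern_of_inducedP4_of_lt {x y z w : Fin n} (hxy : (inversionGraph σ).Adj x y)
    (hyz : (inversionGraph σ).Adj y z) (hzw : (inversionGraph σ).Adj z w)
    (hxz : ¬(inversionGraph σ).Adj x z) (hxw : ¬(inversionGraph σ).Adj x w)
    (hyw : ¬(inversionGraph σ).Adj y w) (hlt : x < w) :
    IsPattern p2413 σ ∨ IsPattern p3142 σ := by
  have hxz' : x ≠ z := by rintro rfl; exact hxw hzw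
  have hyw' : y ≠ w := by rintro rfl; exact hxw hxy
  have := σ.injective.ne hxz'
  have := σ.injective.ne hyw'
  have := σ.injective.ne hlt.ne
  have hxy' := hxy.ne
  rw [inversionGraph_adj] at hxy hyz hzw hxz hxw hyw
  rcases lt_or_gt_of_ne hxy' with h | h
  · exact .inl (isPattern_p2413 (a := x) (b := z) (c := y) (d := w)
      (by omega) (by omega) (by omega) (by omega) (by omega) (by omega))
  · exact .inr (isPattern_p3142 (a := y) (b := x) (c := w) (d := z)
      (by omega) (by omega) (by omega) (by omega) (by omega) (by omega))

lemma isPattern_of_hasInducedP4 (h : (inversionGraph σ).HasInducedP4 Finset.univ) :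
    IsPattern p2413 σ ∨ IsPattern p3142 σ := by
  obtain ⟨x, -, y, -, z, -, w, -, hxy, hyz, hzw, hxz, hxw, hyw⟩ := h
  rcases lt_or_gt_of_ne (show x ≠ w by rintro rfl; exact hxz hzw.symm) with hlt | hlt
  · exact isPattern_of_inducedP4_of_lt hxy hyz hzw hxz hxw hyw hlt
  · exact isPattern_of_inducedP4_of_lt hzw.symm hyz.symm hxy.symm (fun h => hyw h.symm)
      (fun h => hxw h.symm) (fun h => hxz h.symm) hlt

end Patterns

/-- Every simple permutation of size at least 4 contains `2413` or `3142`
as a pattern. -/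
theorem simple_contains_2413_or_3142 {n : ℕ} (σ : Equiv.Perm (Fin n))
    (hσ : IsSimple σ) (h4 : 4 ≤ n) :
    IsPattern p2413 σ ∨ IsPattern p3142 σ := by
  have hcard : 2 ≤ (Finset.univ : Finset (Fin n)).card := by
    rw [Finset.card_univ, Fintype.card_fin]; omega
  rcases (inversionGraph σ).isSplit_or_isSplit_compl_or_hasInducedP4 _ hcard with h | h | h
  · have hbot := eq_bot_of_isSplit_univ hσ nonadjTransAlong_id_inversionGraph
      nonadjTransAlong_inversionGraph h
    exact absurd hσ (not_isSimple_of_strictMono_or_strictAnti (by omega)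
      (.inl (strictMono_of_inversionGraph_eq_bot hbot)))
  · have hbot := eq_bot_of_isSplit_univ hσ nonadjTransAlong_id_compl_inversionGraph
      nonadjTransAlong_compl_inversionGraph h
    exact absurd hσ (not_isSimple_of_strictMono_or_strictAnti (by omega)
      (.inr (strictAnti_of_compl_inversionGraph_eq_bot hbot)))
  · exact isPattern_of_hasInducedP4 h
end

section
/- Let σ be an exceptional permutation. If 3 ≤ m ≤ |σ|, then σ has a simple pattern of size m if and only if m is even. -/
open Equiv Filter Asymptotics

/-!
Taking the complement `σ ↦ rev ∘ σ` and the inverse preserves simplicity and patterns, and these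
symmetries carry every exceptional permutation to the first type `2 4 ⋯ (2M) 1 3 ⋯ (2M-1)`.
That permutation is simple, and its positions `1, …, k, M+1, …, M+k` carry a copy of the
first-type permutation of size `2k`, so every even size occurs. Conversely, every pattern of it
is increasing on an initial segment of positions and on the remaining ones. In a simple such
permutation two consecutive values never lie in the same run (they would sit at adjacent
positions), the value `1` lies in the second run and the maximum in the first; hence the values
alternate between the runs and the size is even.
-/

section Intervals

variable {n : ℕ} {π : Perm (Fin n)} {s : Finset (Fin n)}

lemma isConsecutive_pair {a b : Fin n} (hab : (b : ℕ) = a + 1) : IsConsecutive {a, b} := by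
  intro i j k hi hk hij hjk
  simp only [Finset.mem_insert, Finset.mem_singleton, Fin.ext_iff] at hi hk ⊢
  rw [Fin.le_def] at hij hjk
  omega

lemma isConsecutive_univ_erase {a : Fin n} (ha : (a : ℕ) = 0 ∨ (a : ℕ) + 1 = n) :
    IsConsecutive (Finset.univ.erase a) := by
  intro i j k hi hk hij hjk
  simp only [Finset.mem_erase, Finset.mem_univ, and_true, ne_eq, Fin.ext_iff] at hi hk ⊢
  rw [Fin.le_def] at hij hjk
  have := k.isLt
  omega

lemma IsSimple.card_eq (hπ : IsSimple π) (hs : IsPermInterval π s) (hcard : 2 ≤ s.card) :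
    s.card = n := by
  rcases hπ s hs with h | rfl
  · omega
  · simp

lemma not_isSimple_of_adjacent_values (hn : 3 ≤ n) {i j : Fin n} (hij : (j : ℕ) = i + 1)
    (hv : (π j : ℕ) = π i + 1) : ¬ IsSimple π := by
  intro hπ
  have hne : i ≠ j := by simp [Fin.ext_iff, hij]
  have hs : IsPermInterval π {i, j} := by
    refine ⟨isConsecutive_pair hij, ?_⟩
    rw [Finset.image_insert, Finset.image_singleton]
    exact isConsecutive_pair hv
  have := hπ.card_eq hs (by rw [Finset.card_pair hne])
  rw [Finset.card_pair hne] at this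
  omega

lemma not_isSimple_of_fixed_end (hn : 3 ≤ n) {a : Fin n} (ha : (a : ℕ) = 0 ∨ (a : ℕ) + 1 = n)
    (hfix : π a = a) : ¬ IsSimple π := by
  intro hπ
  have hs : IsPermInterval π (Finset.univ.erase a) := by
    refine ⟨isConsecutive_univ_erase ha, ?_⟩
    rw [Finset.image_erase π.injective, Finset.image_univ_equiv, hfix]
    exact isConsecutive_univ_erase ha
  have hcard : (Finset.univ.erase a).card = n - 1 := by simp
  have := hπ.card_eq hs (by omega)
  omega

lemma IsPermInterval.exists_succ_value (hs : IsPermInterval π s) (hcard : 1 < s.card) :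
    ∃ x ∈ s, ∃ y ∈ s, (π y : ℕ) = π x + 1 := by
  obtain ⟨a, ha, b, hb, hab⟩ := Finset.one_lt_card.mp hcard
  wlog hlt : π a < π b generalizing a b
  · exact this b hb a ha hab.symm (lt_of_le_of_ne (not_lt.mp hlt) (π.injective.ne hab.symm))
  have hmem : (⟨π a + 1, by omega⟩ : Fin n) ∈ s.image π :=
    hs.2 (Finset.mem_image_of_mem π ha) (Finset.mem_image_of_mem π hb)
      (by simp [Fin.le_def]) (Fin.le_def.mpr (Fin.lt_def.mp hlt))
  obtain ⟨y, hy, hye⟩ := Finset.mem_image.mp hmem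
  exact ⟨a, ha, y, hy, by rw [hye]⟩

lemma IsPermInterval.eq_univ (hs : IsPermInterval π s) {a b : Fin n} (ha : a ∈ s) (hb : b ∈ s)
    (hmin : (π a : ℕ) = 0) (hmax : (π b : ℕ) + 1 = n) : s = Finset.univ := by
  refine Finset.eq_univ_iff_forall.mpr fun z => ?_
  have hz : π z ∈ s.image π :=
    hs.2 (Finset.mem_image_of_mem π ha) (Finset.mem_image_of_mem π hb)
      (by rw [Fin.le_def, hmin]; omega) (by rw [Fin.le_def]; have := (π z).isLt; omega)
  obtain ⟨w, hw, hwz⟩ := Finset.mem_image.mp hz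
  rwa [← π.injective hwz]

end Intervals

section Symmetries

variable {k n : ℕ}

lemma isConsecutive_image_rev {t : Finset (Fin n)} (ht : IsConsecutive t) :
    IsConsecutive (t.image Fin.rev) := by
  intro i j k hi hk hij hjk
  simp only [Finset.mem_image] at hi hk ⊢
  obtain ⟨a, ha, rfl⟩ := hi
  obtain ⟨b, hb, rfl⟩ := hk
  exact ⟨j.rev, ht hb ha (Fin.rev_le_rev.mp (by rwa [Fin.rev_rev])) (Fin.rev_le_rev.mp
    (by rwa [Fin.rev_rev])), Fin.rev_rev j⟩

lemma isConsecutive_image_rev_iff {t : Finset (Fin n)} :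
    IsConsecutive (t.image Fin.rev) ↔ IsConsecutive t := by
  refine ⟨fun h => ?_, isConsecutive_image_rev⟩
  simpa [Finset.image_image, Function.comp_def] using isConsecutive_image_rev h

lemma isSimple_revPerm_mul_iff {σ : Perm (Fin n)} : IsSimple (Fin.revPerm * σ) ↔ IsSimple σ := by
  have h : ∀ s : Finset (Fin n), IsPermInterval (Fin.revPerm * σ) s ↔ IsPermInterval σ s := by
    intro s
    have himg : s.image ⇑(Fin.revPerm * σ : Perm (Fin n)) = (s.image σ).image Fin.rev := by
      rw [Finset.image_image]; rfl
    rw [IsPermInterval, IsPermInterval, himg, isConsecutive_image_rev_iff]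
  simp only [IsSimple, h]

lemma isPattern_revPerm_mul_iff {π : Perm (Fin k)} {σ : Perm (Fin n)} :
    IsPattern (Fin.revPerm * π) (Fin.revPerm * σ) ↔ IsPattern π σ :=
  exists_congr fun _ => by
    simp only [Perm.mul_apply, Fin.revPerm_apply, Fin.rev_lt_rev]
    exact forall_comm

lemma isSimple_inv {σ : Perm (Fin n)} (h : IsSimple σ) : IsSimple σ⁻¹ := by
  intro s hs
  have himg : (s.image ⇑σ⁻¹).image σ = s := by simp [Finset.image_image, Function.comp_def]
  have hs' : IsPermInterval σ (s.image ⇑σ⁻¹) := ⟨hs.2, by rw [himg]; exact hs.1⟩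
  rcases h _ hs' with h | h
  · left; rwa [Finset.card_image_of_injective _ σ⁻¹.injective] at h
  · right; rw [← himg, h, Finset.image_univ_equiv]

lemma isPattern_inv {π : Perm (Fin k)} {σ : Perm (Fin n)} (h : IsPattern π σ) :
    IsPattern π⁻¹ σ⁻¹ := by
  obtain ⟨f, hf⟩ := h
  refine ⟨OrderEmbedding.ofStrictMono (fun a => σ (f (π⁻¹ a))) fun a b hab => ?_, fun i j => ?_⟩
  · exact (hf _ _).mp (by simpa using hab)
  · simp

lemma isPattern_inv_iff {π : Perm (Fin k)} {σ : Perm (Fin n)} :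
    IsPattern π⁻¹ σ⁻¹ ↔ IsPattern π σ :=
  ⟨fun h => by simpa using isPattern_inv h, isPattern_inv⟩

def HasSimplePatternOfSize (m : ℕ) (σ : Perm (Fin n)) : Prop :=
  ∃ π : Perm (Fin m), IsSimple π ∧ IsPattern π σ

lemma hasSimplePatternOfSize_revPerm_mul_iff {m : ℕ} {σ : Perm (Fin n)} :
    HasSimplePatternOfSize m (Fin.revPerm * σ) ↔ HasSimplePatternOfSize m σ := by
  have hinvol : ∀ {k : ℕ} (π : Perm (Fin k)), Fin.revPerm * (Fin.revPerm * π) = π := by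
    intro k π; ext; simp
  constructor
  · rintro ⟨π, hs, hp⟩
    refine ⟨Fin.revPerm * π, isSimple_revPerm_mul_iff.mpr hs, ?_⟩
    rwa [← isPattern_revPerm_mul_iff, hinvol]
  · rintro ⟨π, hs, hp⟩
    exact ⟨Fin.revPerm * π, isSimple_revPerm_mul_iff.mpr hs, isPattern_revPerm_mul_iff.mpr hp⟩

lemma hasSimplePatternOfSize_inv_iff {m : ℕ} {σ : Perm (Fin n)} :
    HasSimplePatternOfSize m σ⁻¹ ↔ HasSimplePatternOfSize m σ := by
  constructor
  · rintro ⟨π, hs, hp⟩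
    exact ⟨π⁻¹, isSimple_inv hs, by rw [← isPattern_inv_iff, inv_inv]; exact hp⟩
  · rintro ⟨π, hs, hp⟩
    exact ⟨π⁻¹, isSimple_inv hs, isPattern_inv hp⟩

end Symmetries

section ExceptionalTypes

variable {n : ℕ} {σ : Perm (Fin n)}

lemma exceptionalValue_zero (M i : ℕ) :
    exceptionalValue 0 M i = if i < M then 2 * i + 1 else 2 * (i - M) := by
  simp [exceptionalValue]

lemma exceptionalValue_one (M i : ℕ) :
    exceptionalValue 1 M i = if i < M then 2 * (M - i - 1) else 2 * (2 * M - i) - 1 := by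
  simp [exceptionalValue]

lemma exceptionalValue_two (M i : ℕ) :
    exceptionalValue 2 M i = if i % 2 = 0 then M + i / 2 else i / 2 := by
  simp [exceptionalValue]

lemma exceptionalValue_three (M i : ℕ) :
    exceptionalValue 3 M i = if i % 2 = 0 then M - i / 2 - 1 else 2 * M - i / 2 - 1 := by
  simp [exceptionalValue]

lemma IsExceptionalOfType.revPerm_mul_of_one (h : IsExceptionalOfType 1 σ) :
    IsExceptionalOfType 0 (Fin.revPerm * σ) := by
  obtain ⟨M, hM, hn, hv⟩ := h
  refine ⟨M, hM, hn, fun i => ?_⟩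
  have hval := hv i
  have := (σ i).isLt
  rw [exceptionalValue_one] at hval
  simp only [Perm.mul_apply, Fin.revPerm_apply, Fin.val_rev, exceptionalValue_zero]
  split_ifs at hval ⊢ <;> omega

lemma IsExceptionalOfType.revPerm_mul_of_three (h : IsExceptionalOfType 3 σ) :
    IsExceptionalOfType 2 (Fin.revPerm * σ) := by
  obtain ⟨M, hM, hn, hv⟩ := h
  refine ⟨M, hM, hn, fun i => ?_⟩
  have hval := hv i
  have := (σ i).isLt
  rw [exceptionalValue_three] at hval
  simp only [Perm.mul_apply, Fin.revPerm_apply, Fin.val_rev, exceptionalValue_two]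
  split_ifs at hval ⊢ <;> omega

lemma IsExceptionalOfType.inv_of_two (h : IsExceptionalOfType 2 σ) :
    IsExceptionalOfType 0 σ⁻¹ := by
  obtain ⟨M, hM, hn, hv⟩ := h
  refine ⟨M, hM, hn, fun i => ?_⟩
  have hlt : exceptionalValue 0 M i < n := by
    rw [exceptionalValue_zero]; split_ifs <;> omega
  have hσ : σ ⟨_, hlt⟩ = i := by
    ext
    rw [hv, exceptionalValue_two]
    simp only [exceptionalValue_zero]
    split_ifs <;> omega
  rw [Perm.inv_eq_iff_eq.mpr hσ.symm]

lemma IsExceptional.exists_type_zero (h : IsExceptional σ) (m : ℕ) :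
    ∃ τ : Perm (Fin n), IsExceptionalOfType 0 τ ∧
      (HasSimplePatternOfSize m τ ↔ HasSimplePatternOfSize m σ) := by
  obtain ⟨t, ht⟩ := h
  fin_cases t
  · exact ⟨σ, ht, Iff.rfl⟩
  · exact ⟨_, ht.revPerm_mul_of_one, hasSimplePatternOfSize_revPerm_mul_iff⟩
  · exact ⟨_, ht.inv_of_two, hasSimplePatternOfSize_inv_iff⟩
  · exact ⟨_, ht.revPerm_mul_of_three.inv_of_two,
      hasSimplePatternOfSize_inv_iff.trans hasSimplePatternOfSize_revPerm_mul_iff⟩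

end ExceptionalTypes

section Grassmannian

variable {m : ℕ} {π : Perm (Fin m)} {s : Set (Fin m)}

/-- A Grassmannian permutation (at most one descent), recorded together with the initial segment
`s` of positions at whose end the descent may occur. -/
def IsGrassmannianWith (π : Perm (Fin m)) (s : Set (Fin m)) : Prop :=
  IsLowerSet s ∧ ∀ ⦃i j⦄, i < j → (i ∈ s ↔ j ∈ s) → π i < π j

lemma IsPattern.exists_isGrassmannianWith {n : ℕ} {σ : Perm (Fin n)} {t : Set (Fin n)}
    (h : IsPattern π σ) (hσ : IsGrassmannianWith σ t) : ∃ s, IsGrassmannianWith π s := by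
  obtain ⟨f, hf⟩ := h
  exact ⟨f ⁻¹' t, hσ.1.preimage f.monotone,
    fun i j hij hmem => (hf i j).mpr (hσ.2 (f.strictMono hij) hmem)⟩

lemma IsGrassmannianWith.not_mem_iff_of_succ_value
    (h : IsGrassmannianWith π s) (hπ : IsSimple π) (hm : 3 ≤ m)
    {i j : Fin m} (hv : (π j : ℕ) = π i + 1) : ¬ (i ∈ s ↔ j ∈ s) := by
  intro hij
  have hlt : i < j := by
    refine lt_of_le_of_ne (not_lt.mp fun hji => ?_) fun he => by simp [he] at hv
    have := Fin.lt_def.mp (h.2 hji hij.symm)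
    omega
  refine not_isSimple_of_adjacent_values hm ?_ hv hπ
  by_contra hne
  have := j.isLt
  have hik : i < ⟨i + 1, by omega⟩ := Fin.lt_def.mpr (by simp)
  have hkj : (⟨i + 1, by omega⟩ : Fin m) < j := Fin.lt_def.mpr (by simp; omega)
  have hk : i ∈ s ↔ (⟨i + 1, by omega⟩ : Fin m) ∈ s :=
    ⟨fun hi => h.1 hkj.le (hij.mp hi), fun hk => h.1 hik.le hk⟩
  have h1 := Fin.lt_def.mp (h.2 hik hk)
  have h2 := Fin.lt_def.mp (h.2 hkj (hk.symm.trans hij))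
  omega

lemma IsGrassmannianWith.not_mem_of_value_eq_zero
    (h : IsGrassmannianWith π s) (hπ : IsSimple π) (hm : 3 ≤ m)
    {z : Fin m} (hz : (π z : ℕ) = 0) : z ∉ s := by
  intro hzs
  rcases eq_or_lt_of_le (Fin.le_def.mpr (Nat.zero_le z) : (⟨0, by omega⟩ : Fin m) ≤ z)
    with hoz | hoz
  · exact not_isSimple_of_fixed_end hm (a := z) (Or.inl (by rw [← hoz]))
      (Fin.ext (by rw [hz, ← hoz])) hπ
  · have := Fin.lt_def.mp (h.2 hoz ⟨fun _ => hzs, fun _ => h.1 hoz.le hzs⟩)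
    omega

lemma IsGrassmannianWith.mem_of_value_succ_eq
    (h : IsGrassmannianWith π s) (hπ : IsSimple π) (hm : 3 ≤ m)
    {z : Fin m} (hz : (π z : ℕ) + 1 = m) : z ∈ s := by
  by_contra hzs
  rcases eq_or_lt_of_le (Fin.le_def.mpr (by have := z.isLt; simp; omega) :
    z ≤ ⟨m - 1, by omega⟩) with hzl | hzl
  · have hzv : (z : ℕ) = m - 1 := by rw [hzl]
    exact not_isSimple_of_fixed_end hm (a := z) (Or.inr (by omega)) (Fin.ext (by omega)) hπ
  · have := Fin.lt_def.mp (h.2 hzl ⟨fun hz => absurd hz hzs, fun hl => absurd (h.1 hzl.le hl) hzs⟩)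
    have := (π ⟨m - 1, by omega⟩).isLt
    omega

lemma IsGrassmannianWith.even_of_isSimple
    (h : IsGrassmannianWith π s) (hπ : IsSimple π) (hm : 3 ≤ m) :
    Even m := by
  have hparity : ∀ v (hv : v < m), π.symm ⟨v, hv⟩ ∈ s ↔ Odd v := by
    intro v
    induction v with
    | zero =>
      intro hv
      simpa using h.not_mem_of_value_eq_zero hπ hm (z := π.symm ⟨0, hv⟩) (by simp)
    | succ v ih =>
      intro hv
      have := h.not_mem_iff_of_succ_value hπ hm (i := π.symm ⟨v, by omega⟩)
        (j := π.symm ⟨v + 1, hv⟩) (by simp)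
      rw [Nat.odd_add_one, ← ih (by omega)]
      tauto
  obtain ⟨r, hr⟩ := (hparity (m - 1) (by omega)).mp
    (h.mem_of_value_succ_eq hπ hm (by simp; omega))
  exact ⟨r + 1, by omega⟩

end Grassmannian

section TypeZero

variable {n : ℕ} {σ : Perm (Fin n)}

lemma IsExceptionalOfType.isGrassmannianWith_of_zero (h : IsExceptionalOfType 0 σ) :
    ∃ s, IsGrassmannianWith σ s := by
  obtain ⟨M, -, -, hv⟩ := h
  refine ⟨{i | (i : ℕ) < M}, fun i j hji hj => lt_of_le_of_lt (Fin.le_def.mp hji) hj,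
    fun i j hij (hmem : (i : ℕ) < M ↔ (j : ℕ) < M) => ?_⟩
  rw [Fin.lt_def, hv, hv, exceptionalValue_zero, exceptionalValue_zero]
  rw [Fin.lt_def] at hij
  split_ifs <;> omega

/-- An interval with two points contains two consecutive values; by parity one sits in each half,
so the interval contains the middle positions, which carry the values `2M - 1` and `0`. -/
lemma IsExceptionalOfType.isSimple_of_zero (h : IsExceptionalOfType 0 σ) : IsSimple σ := by
  obtain ⟨M, hM, rfl, hv⟩ := h
  intro s hs
  by_contra! hne
  obtain ⟨x, hx, y, hy, hxy⟩ := hs.exists_succ_value hne.1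
  have hxv := hv x
  have hyv := hv y
  rw [exceptionalValue_zero] at hxv hyv
  have hside : (x : ℕ) < M ↔ ¬ (y : ℕ) < M := by split_ifs at hxv hyv <;> omega
  have hmid : ∀ j : Fin (2 * M), (j : ℕ) = M - 1 ∨ (j : ℕ) = M → j ∈ s := by
    intro j hj
    rcases lt_or_ge (x : ℕ) M with hxM | hxM
    · exact hs.1 hx hy (Fin.le_def.mpr (by omega)) (Fin.le_def.mpr (by omega))
    · exact hs.1 hy hx (Fin.le_def.mpr (by omega)) (Fin.le_def.mpr (by omega))
  refine hne.2 (hs.eq_univ (a := ⟨M, by omega⟩) (b := ⟨M - 1, by omega⟩)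
    (hmid _ (by simp)) (hmid _ (by simp)) ?_ ?_)
  · rw [hv, exceptionalValue_zero]; simp
  · rw [hv, exceptionalValue_zero]; simp only [if_pos (show M - 1 < M by omega)]; omega

lemma IsExceptionalOfType.isPattern_of_zero {k : ℕ} {τ : Perm (Fin k)}
    (hτ : IsExceptionalOfType 0 τ) (hσ : IsExceptionalOfType 0 σ) (hkn : k ≤ n) :
    IsPattern τ σ := by
  obtain ⟨K, -, rfl, hτv⟩ := hτ
  obtain ⟨M, -, rfl, hσv⟩ := hσ
  let f : Fin (2 * K) → Fin (2 * M) := fun i =>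
    ⟨if (i : ℕ) < K then i else M + (i - K), by have := i.isLt; split <;> omega⟩
  have hf : StrictMono f := by
    intro i j hij
    rw [Fin.lt_def] at hij ⊢
    simp only [f]
    split_ifs <;> omega
  have hval : ∀ i, (σ (f i) : ℕ) = τ i := by
    intro i
    rw [hσv, hτv, exceptionalValue_zero, exceptionalValue_zero]
    have := i.isLt
    simp only [f]
    split_ifs <;> omega
  refine ⟨OrderEmbedding.ofStrictMono f hf, fun i j => ?_⟩
  change τ i < τ j ↔ σ (f i) < σ (f j)
  rw [Fin.lt_def, Fin.lt_def, hval, hval]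

end TypeZero

def exceptionalZero (k : ℕ) : Perm (Fin (k + k)) where
  toFun i := ⟨exceptionalValue 0 k i, by rw [exceptionalValue_zero]; split_ifs <;> omega⟩
  invFun j := ⟨if (j : ℕ) % 2 = 1 then j / 2 else k + j / 2, by split_ifs <;> omega⟩
  left_inv i := by
    ext
    simp only [exceptionalValue_zero]
    split_ifs <;> omega
  right_inv j := by
    ext
    simp only [exceptionalValue_zero]
    split_ifs <;> omega

lemma isExceptionalOfType_exceptionalZero {k : ℕ} (hk : 2 ≤ k) :
    IsExceptionalOfType 0 (exceptionalZero k) :=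
  ⟨k, hk, (two_mul k).symm, fun _ => rfl⟩

/-- An exceptional permutation `σ` has a simple pattern of size `m`
(for `3 ≤ m ≤ |σ|`) iff `m` is even. -/
theorem exceptional_simple_pattern_iff_even {n : ℕ} (σ : Equiv.Perm (Fin n))
    (hσ : IsExceptional σ) (m : ℕ) (h3 : 3 ≤ m) (hm : m ≤ n) :
    (∃ π : Equiv.Perm (Fin m), IsSimple π ∧ IsPattern π σ) ↔ Even m := by
  obtain ⟨τ, hτ, hiff⟩ := hσ.exists_type_zero m
  change HasSimplePatternOfSize m σ ↔ Even m
  rw [← hiff]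
  constructor
  · rintro ⟨π, hπ, hpat⟩
    obtain ⟨t, ht⟩ := hτ.isGrassmannianWith_of_zero
    obtain ⟨s, hs⟩ := hpat.exists_isGrassmannianWith ht
    exact hs.even_of_isSimple hπ h3
  · rintro ⟨k, rfl⟩
    have hk := isExceptionalOfType_exceptionalZero (k := k) (by omega)
    exact ⟨exceptionalZero k, hk.isSimple_of_zero, hk.isPattern_of_zero hτ hm⟩
end

section
/- Let τ be a non-simple permutation of size n and i an index such that the permutation obtained from τ by deleting the point at position i is simple. Then either the point (i, τ(i)) belongs to an interval of τ of size 2, or (i, τ(i)) is a corner of the graphical representation of τ, i.e., i ∈ {1, n} and τ(i) ∈ {1, n}. -/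
open Equiv Filter Asymptotics

lemma corner_aux {n : ℕ} (s : Finset (Fin (n+1))) (hc : IsConsecutive s)
    (x : Fin (n+1)) (hx : x ∉ s) (hcard : s.card = n) :
    (x : ℕ) = 0 ∨ (x : ℕ) = n := by
  have hsub : s ⊆ Finset.univ.erase x := fun j hj =>
    Finset.mem_erase.2 ⟨fun h => hx (h ▸ hj), Finset.mem_univ j⟩
  have heq : s = Finset.univ.erase x :=
    Finset.eq_of_subset_of_card_le hsub (by simp [hcard])
  by_contra h
  push_neg at h
  obtain ⟨h0, hn⟩ := h
  have h0' : (0 : Fin (n+1)) ∈ s := by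
    rw [heq, Finset.mem_erase]
    exact ⟨fun e => h0 (by simp [← e]), Finset.mem_univ _⟩
  have hn' : Fin.last n ∈ s := by
    rw [heq, Finset.mem_erase]
    exact ⟨fun e => hn (by simp [← e]), Finset.mem_univ _⟩
  exact hx (hc h0' hn' (Fin.zero_le x) (Fin.le_last x))


/-- If `τ` is not simple but deleting the point at position `i` of `τ`
gives a simple permutation, then the point `(i, τ i)` belongs to an interval of size 2
of `τ`, or it is a corner of the graphical representation of `τ`. -/
theorem deletion_simple_interval_or_corner {n : ℕ} (τ : Equiv.Perm (Fin (n + 1)))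
    (hτ : ¬ IsSimple τ) (i : Fin (n + 1)) (τ' : Equiv.Perm (Fin n))
    (hdel : IsDeletion τ i τ') (hs : IsSimple τ') :
    (∃ s : Finset (Fin (n + 1)), IsPermInterval τ s ∧ s.card = 2 ∧ i ∈ s) ∨
    (((i : ℕ) = 0 ∨ (i : ℕ) = n) ∧ ((τ i : ℕ) = 0 ∨ (τ i : ℕ) = n)) := by
  rw [IsSimple] at hτ
  push_neg at hτ
  obtain ⟨s, hsint, hs2, hsne⟩ := hτ
  set t : Finset (Fin n) := Finset.univ.filter (fun j => i.succAbove j ∈ s) with ht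
  have htmem : ∀ j, j ∈ t ↔ i.succAbove j ∈ s := by intro j; simp [ht]
  have hle : ∀ j k : Fin n, τ' j ≤ τ' k ↔ τ (i.succAbove j) ≤ τ (i.succAbove k) := by
    intro j k
    rw [← not_lt, ← not_lt, hdel]
  have htint : IsPermInterval τ' t := by
    constructor
    · intro a b c ha hc hab hbc
      rw [htmem] at *
      exact hsint.1 ha hc ((Fin.succAbove_le_succAbove_iff).2 hab)
        ((Fin.succAbove_le_succAbove_iff).2 hbc)
    · intro a b c ha hc hab hbc
      simp only [Finset.mem_image] at ha hc ⊢
      obtain ⟨a', ha't, rfl⟩ := ha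
      obtain ⟨c', hc't, rfl⟩ := hc
      refine ⟨τ'.symm b, ?_, τ'.apply_symm_apply b⟩
      rw [htmem]
      have h1 : τ (i.succAbove a') ≤ τ (i.succAbove (τ'.symm b)) :=
        (hle _ _).1 (by rwa [τ'.apply_symm_apply])
      have h2 : τ (i.succAbove (τ'.symm b)) ≤ τ (i.succAbove c') :=
        (hle _ _).1 (by rwa [τ'.apply_symm_apply])
      have hmem := hsint.2 (Finset.mem_image_of_mem τ ((htmem a').1 ha't))
        (Finset.mem_image_of_mem τ ((htmem c').1 hc't)) h1 h2
      obtain ⟨x, hx, hx'⟩ := Finset.mem_image.1 hmem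
      rwa [← τ.injective hx']
  have himg : t.image i.succAbove = s.erase i := by
    ext j
    simp only [Finset.mem_image, Finset.mem_erase, htmem]
    constructor
    · rintro ⟨a, ha, rfl⟩
      exact ⟨Fin.succAbove_ne i a, ha⟩
    · rintro ⟨hji, hjs⟩
      obtain ⟨a, rfl⟩ := Fin.exists_succAbove_eq hji
      exact ⟨a, hjs, rfl⟩
  have hcardt : t.card = (s.erase i).card := by
    rw [← himg, Finset.card_image_of_injective _ Fin.succAbove_right_injective]
  rcases hs t htint with hc1 | huniv
  · -- card t ≤ 1
    by_cases hi : i ∈ s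
    · left
      refine ⟨s, hsint, ?_, hi⟩
      have := Finset.card_erase_of_mem hi
      omega
      -- card s = 2
    · exfalso
      rw [Finset.erase_eq_of_notMem hi] at hcardt
      omega
  · -- t = univ
    have hcn : (s.erase i).card = n := by
      rw [← hcardt, huniv, Finset.card_univ, Fintype.card_fin]
    by_cases hi : i ∈ s
    · exfalso
      apply hsne
      apply Finset.eq_univ_of_card
      have := Finset.card_erase_of_mem hi
      simp only [Fintype.card_fin]
      omega
    · right
      rw [Finset.erase_eq_of_notMem hi] at hcn
      constructor
      · exact corner_aux s hsint.1 i hi hcn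
      · refine corner_aux (s.image τ) hsint.2 (τ i) ?_ ?_
        · intro hmem
          obtain ⟨x, hx, hx'⟩ := Finset.mem_image.1 hmem
          exact hi (τ.injective hx' ▸ hx)
        · rw [Finset.card_image_of_injective _ τ.injective, hcn]
end

section
/- Let π be a simple permutation of size n ≥ 4. Then the number of simple permutations σ of size n + 1 such that π is a pattern of σ equals (n + 1)(n − 3). -/
open Equiv Filter Asymptotics

namespace SE

variable {n : ℕ}

def ins (π : Equiv.Perm (Fin n)) (p v : Fin (n + 1)) : Equiv.Perm (Fin (n + 1)) :=
  (finSuccEquiv' p).trans ((Equiv.optionCongr π).trans (finSuccEquiv' v).symm)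

@[simp] lemma ins_apply_self (π : Equiv.Perm (Fin n)) (p v : Fin (n + 1)) :
    ins π p v p = v := by
  simp [ins, finSuccEquiv'_at]

@[simp] lemma ins_apply_succAbove (π : Equiv.Perm (Fin n)) (p v : Fin (n + 1)) (i : Fin n) :
    ins π p v (p.succAbove i) = v.succAbove (π i) := by
  simp [ins, finSuccEquiv'_succAbove]

lemma val_succAbove (p : Fin (n + 1)) (i : Fin n) :
    (p.succAbove i : ℕ) = if (i : ℕ) < (p : ℕ) then (i : ℕ) else (i : ℕ) + 1 := by
  rcases Nat.lt_or_ge (i : ℕ) (p : ℕ) with h | h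
  · rw [Fin.succAbove_of_castSucc_lt _ _ (by simpa [Fin.lt_def] using h)]
    simp [h]
  · rw [Fin.succAbove_of_le_castSucc _ _ (by simpa [Fin.le_def] using h)]
    simp [Nat.not_lt.2 h]

lemma isConsecutive_pair {m : ℕ} {a b : Fin m} (h : (a : ℕ) + 1 = (b : ℕ) ∨ (b : ℕ) + 1 = (a : ℕ)) :
    IsConsecutive ({a, b} : Finset (Fin m)) := by
  intro i j k hi hk hij hjk
  simp only [Finset.mem_insert, Finset.mem_singleton] at *
  rw [Fin.le_def] at hij hjk
  have : (j : ℕ) = (a : ℕ) ∨ (j : ℕ) = (b : ℕ) := by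
    rcases hi with rfl | rfl <;> rcases hk with rfl | rfl <;> omega
  rcases this with h' | h'
  · exact Or.inl (Fin.ext h')
  · exact Or.inr (Fin.ext h')

lemma adj_of_isConsecutive_pair {m : ℕ} {a b : Fin m} (hab : a ≠ b)
    (h : IsConsecutive ({a, b} : Finset (Fin m))) :
    (a : ℕ) + 1 = (b : ℕ) ∨ (b : ℕ) + 1 = (a : ℕ) := by
  by_contra hc
  push_neg at hc
  have hne : (a : ℕ) ≠ (b : ℕ) := fun h' => hab (Fin.ext h')
  rcases Nat.lt_or_ge (a : ℕ) (b : ℕ) with hlt | hge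
  · have hb : (a : ℕ) + 1 < (b : ℕ) := by omega
    have hj : ((⟨(a : ℕ) + 1, lt_trans hb b.isLt⟩ : Fin m)) ∈ ({a, b} : Finset (Fin m)) :=
      h (i := a) (k := b) (by simp) (by simp) (by rw [Fin.le_def]; simp)
        (by rw [Fin.le_def]; simp; omega)
    simp only [Finset.mem_insert, Finset.mem_singleton, Fin.ext_iff] at hj
    simp at hj
    omega
  · have hlt : (b : ℕ) < (a : ℕ) := by omega
    have hb : (b : ℕ) + 1 < (a : ℕ) := by omega
    have hj : ((⟨(b : ℕ) + 1, lt_trans hb a.isLt⟩ : Fin m)) ∈ ({a, b} : Finset (Fin m)) :=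
      h (i := b) (k := a) (by simp) (by simp) (by rw [Fin.le_def]; simp)
        (by rw [Fin.le_def]; simp; omega)
    simp only [Finset.mem_insert, Finset.mem_singleton, Fin.ext_iff] at hj
    simp at hj
    omega

lemma isConsecutive_erase_extreme {m : ℕ} {a : Fin m} (h : (a : ℕ) = 0 ∨ (a : ℕ) + 1 = m) :
    IsConsecutive (Finset.univ.erase a) := by
  intro i j k hi hk hij hjk
  simp only [Finset.mem_erase, Finset.mem_univ, and_true] at *
  rw [Fin.le_def] at hij hjk
  intro hj
  subst hj
  have hkl := k.isLt
  rcases h with h | h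
  · exact hi (Fin.ext (by omega))
  · exact hk (Fin.ext (by omega))

lemma extreme_of_isConsecutive_erase {m : ℕ} {a : Fin m}
    (h : IsConsecutive (Finset.univ.erase a)) : (a : ℕ) = 0 ∨ (a : ℕ) + 1 = m := by
  by_contra hc
  push_neg at hc
  obtain ⟨h0, h1⟩ := hc
  have ha := a.isLt
  have h0' : (0 : ℕ) < (a : ℕ) := Nat.pos_of_ne_zero h0
  have hmem : a ∈ Finset.univ.erase a := by
    refine h (i := ⟨0, by omega⟩) (k := ⟨m - 1, by omega⟩) ?_ ?_ ?_ ?_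
    · simp only [Finset.mem_erase, Finset.mem_univ, and_true, ne_eq, Fin.ext_iff]
      omega
    · simp only [Finset.mem_erase, Finset.mem_univ, and_true, ne_eq, Fin.ext_iff]
      omega
    · simp [Fin.le_def]
    · rw [Fin.le_def]; simp; omega
  simp at hmem

lemma image_succAbove_univ (p : Fin (n + 1)) :
    (Finset.univ.image p.succAbove : Finset (Fin (n + 1))) = Finset.univ.erase p := by
  ext j
  simp only [Finset.mem_image, Finset.mem_univ, true_and, Finset.mem_erase, and_true, ne_eq]
  constructor
  · rintro ⟨i, rfl⟩; exact Fin.succAbove_ne p i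
  · intro hj; exact Fin.exists_succAbove_eq hj

lemma image_erase_perm {m : ℕ} (σ : Equiv.Perm (Fin m)) (a : Fin m) :
    (Finset.univ.erase a).image σ = Finset.univ.erase (σ a) := by
  ext j
  simp only [Finset.mem_image, Finset.mem_erase, Finset.mem_univ, and_true, true_and, ne_eq]
  constructor
  · rintro ⟨x, hx, rfl⟩; exact fun h => hx (σ.injective h)
  · intro hj; exact ⟨σ.symm j, fun h => hj (by rw [← h, Equiv.apply_symm_apply]), by simp⟩

lemma no_two_interval {π : Equiv.Perm (Fin n)} (hπ : IsSimple π) (h4 : 4 ≤ n)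
    {i j : Fin n} (hij : i ≠ j) (hpos : (i : ℕ) + 1 = (j : ℕ) ∨ (j : ℕ) + 1 = (i : ℕ))
    (hval : ((π i : ℕ)) + 1 = (π j : ℕ) ∨ ((π j : ℕ)) + 1 = (π i : ℕ)) : False := by
  have hint : IsPermInterval π {i, j} := by
    constructor
    · exact isConsecutive_pair hpos
    · have himg : ({i, j} : Finset (Fin n)).image π = {π i, π j} := by
        simp [Finset.image_insert, Finset.image_singleton]
      rw [himg]; exact isConsecutive_pair hval
  have h2 : ({i, j} : Finset (Fin n)).card = 2 := Finset.card_pair hij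
  have hu : (Finset.univ : Finset (Fin n)).card = n := by simp
  rcases hπ _ hint with h | h
  · omega
  · rw [h, hu] at h2; omega

lemma not_simple_endpoint {π : Equiv.Perm (Fin n)} (h4 : 4 ≤ n) {i : Fin n}
    (hi : (i : ℕ) = 0 ∨ (i : ℕ) + 1 = n) (hv : ((π i : ℕ)) = 0 ∨ ((π i : ℕ)) + 1 = n) :
    ¬ IsSimple π := by
  intro hπ
  have hint : IsPermInterval π (Finset.univ.erase i) :=
    ⟨isConsecutive_erase_extreme hi, by
      rw [image_erase_perm]; exact isConsecutive_erase_extreme hv⟩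
  have hu : (Finset.univ : Finset (Fin n)).card = n := by simp
  rcases hπ _ hint with h | h
  · rw [Finset.card_erase_of_mem (Finset.mem_univ _), hu] at h
    omega
  · have : i ∈ Finset.univ.erase i := by rw [h]; exact Finset.mem_univ i
    simp at this

def Bad (π : Equiv.Perm (Fin n)) (p v : Fin (n + 1)) : Prop :=
  (∃ i : Fin n, ((p : ℕ) = (i : ℕ) ∨ (p : ℕ) = (i : ℕ) + 1) ∧
    ((v : ℕ) = ((π i : ℕ)) ∨ (v : ℕ) = ((π i : ℕ)) + 1)) ∨
  (((p : ℕ) = 0 ∨ (p : ℕ) = n) ∧ ((v : ℕ) = 0 ∨ (v : ℕ) = n))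

lemma not_simple_of_bad {π : Equiv.Perm (Fin n)} (h4 : 4 ≤ n) {p v : Fin (n + 1)}
    (hb : Bad π p v) : ¬ IsSimple (ins π p v) := by
  intro hs
  have hu : (Finset.univ : Finset (Fin (n + 1))).card = n + 1 := by simp
  rcases hb with ⟨i, hp, hv⟩ | ⟨hp, hv⟩
  · have hppos : ((p : ℕ)) + 1 = ((p.succAbove i : ℕ)) ∨ ((p.succAbove i : ℕ)) + 1 = (p : ℕ) := by
      rw [val_succAbove]; split_ifs with h <;> omega
    have hvval : ((v : ℕ)) + 1 = ((v.succAbove (π i) : ℕ)) ∨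
        ((v.succAbove (π i) : ℕ)) + 1 = (v : ℕ) := by
      rw [val_succAbove]; split_ifs with h <;> omega
    have himg : ({p, p.succAbove i} : Finset (Fin (n + 1))).image (ins π p v) =
        {v, v.succAbove (π i)} := by
      simp [Finset.image_insert, Finset.image_singleton]
    have hint : IsPermInterval (ins π p v) {p, p.succAbove i} := by
      refine ⟨isConsecutive_pair hppos, ?_⟩
      rw [himg]; exact isConsecutive_pair hvval
    have hne : p ≠ p.succAbove i := Fin.ne_succAbove p i
    have h2 : ({p, p.succAbove i} : Finset (Fin (n + 1))).card = 2 := Finset.card_pair hne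
    rcases hs _ hint with h | h
    · omega
    · rw [h, hu] at h2; omega
  · have hint : IsPermInterval (ins π p v) (Finset.univ.erase p) := by
      refine ⟨isConsecutive_erase_extreme (by omega), ?_⟩
      rw [image_erase_perm, ins_apply_self]
      exact isConsecutive_erase_extreme (by omega)
    rcases hs _ hint with h | h
    · rw [Finset.card_erase_of_mem (Finset.mem_univ _), hu] at h
      omega
    · have : p ∈ Finset.univ.erase p := by rw [h]; exact Finset.mem_univ p
      simp at this
lemma simple_of_not_bad {π : Equiv.Perm (Fin n)} (hπ : IsSimple π) (h4 : 4 ≤ n)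
    {p v : Fin (n + 1)} (hb : ¬ Bad π p v) : IsSimple (ins π p v) := by
  classical
  intro s hint
  by_contra hc
  push_neg at hc
  obtain ⟨hcard, huniv⟩ := hc
  set s' : Finset (Fin n) := Finset.univ.filter (fun i => p.succAbove i ∈ s) with hs'def
  have hs'mem : ∀ i : Fin n, i ∈ s' ↔ p.succAbove i ∈ s := by
    intro i; simp [hs'def]
  have hcons' : IsConsecutive s' := by
    intro i j k hi hk hij hjk
    exact (hs'mem j).mpr (hint.1 ((hs'mem i).mp hi) ((hs'mem k).mp hk)
      (Fin.succAbove_le_succAbove_iff.mpr hij) (Fin.succAbove_le_succAbove_iff.mpr hjk))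
  have hval' : IsConsecutive (s'.image π) := by
    intro x y z hx hz hxy hyz
    obtain ⟨ix, hix, hπx⟩ := Finset.mem_image.mp hx
    obtain ⟨iz, hiz, hπz⟩ := Finset.mem_image.mp hz
    have hσx : v.succAbove x ∈ s.image (ins π p v) :=
      Finset.mem_image.mpr ⟨p.succAbove ix, (hs'mem ix).mp hix, by rw [ins_apply_succAbove, hπx]⟩
    have hσz : v.succAbove z ∈ s.image (ins π p v) :=
      Finset.mem_image.mpr ⟨p.succAbove iz, (hs'mem iz).mp hiz, by rw [ins_apply_succAbove, hπz]⟩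
    have hmid : v.succAbove y ∈ s.image (ins π p v) :=
      hint.2 hσx hσz (Fin.succAbove_le_succAbove_iff.mpr hxy)
        (Fin.succAbove_le_succAbove_iff.mpr hyz)
    obtain ⟨w, hw, hσw⟩ := Finset.mem_image.mp hmid
    rcases eq_or_ne w p with rfl | hwp
    · rw [ins_apply_self] at hσw
      exact absurd hσw (Fin.ne_succAbove v y)
    · obtain ⟨u, rfl⟩ := Fin.exists_succAbove_eq hwp
      rw [ins_apply_succAbove] at hσw
      have : π u = y := Fin.succAbove_right_injective hσw
      exact Finset.mem_image.mpr ⟨u, (hs'mem u).mpr hw, this⟩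
  rcases hπ s' ⟨hcons', hval'⟩ with h1 | h1
  · -- s' small
    by_cases hps : p ∈ s
    · -- s = {p, p.succAbove i} for some i
      obtain ⟨q, hq, hqp⟩ := Finset.exists_mem_ne hcard p
      obtain ⟨i, rfl⟩ := Fin.exists_succAbove_eq hqp
      have his' : i ∈ s' := (hs'mem i).mpr hq
      have hs'i : s' = {i} := by
        apply Finset.eq_singleton_iff_unique_mem.mpr
        exact ⟨his', fun b hb => Finset.card_le_one.mp h1 b hb i his'⟩
      have hseq : s = {p, p.succAbove i} := by
        ext x
        constructor
        · intro hx
          rcases eq_or_ne x p with rfl | hxp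
          · simp
          · obtain ⟨u, rfl⟩ := Fin.exists_succAbove_eq hxp
            have : u ∈ s' := (hs'mem u).mpr hx
            rw [hs'i, Finset.mem_singleton] at this
            subst this
            simp
        · intro hx
          rcases Finset.mem_insert.mp hx with rfl | hx
          · exact hps
          · rw [Finset.mem_singleton] at hx
            subst hx
            exact hq
      -- derive Bad
      apply hb
      left
      refine ⟨i, ?_, ?_⟩
      · have hadj := adj_of_isConsecutive_pair (Fin.ne_succAbove p i) (hseq ▸ hint.1)
        rw [val_succAbove] at hadj
        split_ifs at hadj <;> omega
      · have himg : s.image (ins π p v) = {v, v.succAbove (π i)} := by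
          rw [hseq]
          simp [Finset.image_insert, Finset.image_singleton]
        have hne : v ≠ v.succAbove (π i) := Fin.ne_succAbove v (π i)
        have hadj := adj_of_isConsecutive_pair hne (himg ▸ hint.2)
        rw [val_succAbove] at hadj
        split_ifs at hadj <;> omega
    · -- p ∉ s : s embeds into s'
      have hsub : s ⊆ s'.image p.succAbove := by
        intro x hx
        have hxp : x ≠ p := fun h => hps (h ▸ hx)
        obtain ⟨u, rfl⟩ := Fin.exists_succAbove_eq hxp
        exact Finset.mem_image_of_mem _ ((hs'mem u).mpr hx)
      have := Finset.card_le_card hsub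
      have h2 := Finset.card_image_le (s := s') (f := p.succAbove)
      omega
  · -- s' = univ
    have hsub : Finset.univ.erase p ⊆ s := by
      intro x hx
      obtain ⟨hxp, -⟩ := Finset.mem_erase.mp hx
      obtain ⟨u, rfl⟩ := Fin.exists_succAbove_eq hxp
      exact (hs'mem u).mp (h1 ▸ Finset.mem_univ u)
    by_cases hps : p ∈ s
    · apply huniv
      apply Finset.eq_univ_iff_forall.mpr
      intro x
      rcases eq_or_ne x p with rfl | hxp
      · exact hps
      · exact hsub (Finset.mem_erase.mpr ⟨hxp, Finset.mem_univ x⟩)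
    · have hseq : s = Finset.univ.erase p := by
        apply Finset.Subset.antisymm
        · intro x hx
          exact Finset.mem_erase.mpr ⟨fun h => hps (h ▸ hx), Finset.mem_univ x⟩
        · exact hsub
      apply hb
      right
      constructor
      · have := extreme_of_isConsecutive_erase (hseq ▸ hint.1)
        omega
      · have himg : s.image (ins π p v) = Finset.univ.erase v := by
          rw [hseq, image_erase_perm, ins_apply_self]
        have := extreme_of_isConsecutive_erase (himg ▸ hint.2)
        omega
lemma pattern_ins (π : Equiv.Perm (Fin n)) (p v : Fin (n + 1)) : IsPattern π (ins π p v) := by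
  refine ⟨p.succAboveOrderEmb, fun i j => ?_⟩
  have h1 : p.succAboveOrderEmb i = p.succAbove i := rfl
  have h2 : p.succAboveOrderEmb j = p.succAbove j := rfl
  rw [h1, h2, ins_apply_succAbove, ins_apply_succAbove, Fin.succAbove_lt_succAbove_iff]

lemma eq_ins_of_pattern {π : Equiv.Perm (Fin n)} {σ : Equiv.Perm (Fin (n + 1))}
    (h : IsPattern π σ) : ∃ p v, σ = ins π p v := by
  classical
  obtain ⟨f, hf⟩ := h
  have hinj : Function.Injective (f : Fin n → Fin (n + 1)) := f.injective
  have hcard : (Finset.univ.image (f : Fin n → Fin (n + 1))).card = n := by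
    rw [Finset.card_image_of_injective _ hinj]; simp
  obtain ⟨p, hp⟩ : ∃ p, p ∉ Finset.univ.image (f : Fin n → Fin (n + 1)) := by
    by_contra hcon
    push_neg at hcon
    have : (Finset.univ.image (f : Fin n → Fin (n + 1))) = Finset.univ :=
      Finset.eq_univ_iff_forall.mpr hcon
    rw [this] at hcard
    simp at hcard
  have herase : ∀ x : Fin n, f x ∈ Finset.univ.erase p := fun x =>
    Finset.mem_erase.mpr ⟨fun h => hp (h ▸ Finset.mem_image_of_mem _ (Finset.mem_univ x)),
      Finset.mem_univ _⟩
  have hcard' : (Finset.univ.erase p).card = n := by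
    rw [Finset.card_erase_of_mem (Finset.mem_univ _)]; simp
  have hf_eq : (f : Fin n → Fin (n + 1)) = (Finset.univ.erase p).orderEmbOfFin hcard' :=
    Finset.orderEmbOfFin_unique hcard' herase f.strictMono
  have hpsa_eq : (p.succAbove : Fin n → Fin (n + 1)) = (Finset.univ.erase p).orderEmbOfFin hcard' :=
    Finset.orderEmbOfFin_unique hcard'
      (fun x => Finset.mem_erase.mpr ⟨Fin.succAbove_ne p x, Finset.mem_univ _⟩)
      (Fin.strictMono_succAbove p)
  have hfp : ∀ x, f x = p.succAbove x := fun x => by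
    rw [show (f x : Fin (n+1)) = _ from congrFun hf_eq x, ← congrFun hpsa_eq x]
  set v := σ p with hv
  have hne : ∀ i, σ (p.succAbove i) ≠ v := fun i h => Fin.succAbove_ne p i (σ.injective h)
  choose τ hτ using fun i => Fin.exists_succAbove_eq (hne i)
  have hcmp : ∀ i j, π i < π j ↔ τ i < τ j := by
    intro i j
    rw [hf i j, hfp i, hfp j, ← hτ i, ← hτ j, Fin.succAbove_lt_succAbove_iff]
  have hg : StrictMono (τ ∘ (π.symm : Fin n → Fin n)) := by
    intro a b hab
    apply (hcmp _ _).mp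
    simpa using hab
  have hcardu : (Finset.univ : Finset (Fin n)).card = n := by simp
  have h1 : (τ ∘ (π.symm : Fin n → Fin n)) = Finset.univ.orderEmbOfFin hcardu :=
    Finset.orderEmbOfFin_unique hcardu (fun x => Finset.mem_univ _) hg
  have h2 : (id : Fin n → Fin n) = Finset.univ.orderEmbOfFin hcardu :=
    Finset.orderEmbOfFin_unique hcardu (fun x => Finset.mem_univ _) strictMono_id
  have hτ_eq : ∀ i, τ i = π i := by
    intro i
    have h3 := congrFun (h1.trans h2.symm) (π i)
    simpa using h3
  refine ⟨p, v, ?_⟩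
  apply Equiv.ext
  intro j
  rcases eq_or_ne j p with rfl | hj
  · rw [ins_apply_self]
  · obtain ⟨u, rfl⟩ := Fin.exists_succAbove_eq hj
    rw [ins_apply_succAbove, ← hτ_eq u, hτ u]

lemma ins_inj_aux {π : Equiv.Perm (Fin n)} (hπ : IsSimple π) (h4 : 4 ≤ n)
    {p v p' v' : Fin (n + 1)} (hlt : (p : ℕ) < (p' : ℕ)) (hgood : ¬ Bad π p v)
    (h : ins π p v = ins π p' v') : False := by
  have hP'n : (p' : ℕ) ≤ n := by have := p'.isLt; omega
  have hPn : (p : ℕ) < n := by omega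
  set i₀ : Fin n := ⟨(p : ℕ), hPn⟩ with hi₀
  have hsa₀ : p'.succAbove i₀ = p := by
    rw [Fin.succAbove_of_castSucc_lt _ _ (by rw [Fin.lt_def]; exact hlt)]
    exact Fin.ext rfl
  have h₁ : v = v'.succAbove (π i₀) := by
    calc v = ins π p v p := (ins_apply_self π p v).symm
    _ = ins π p' v' p := by rw [h]
    _ = v'.succAbove (π i₀) := by rw [← hsa₀, ins_apply_succAbove]
  rcases Nat.lt_or_ge ((p : ℕ) + 1) (p' : ℕ) with hgap | hgap
  · -- p' ≥ p + 2 : two-interval in π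
    have hP1n : (p : ℕ) + 1 < n := by omega
    set i₁ : Fin n := ⟨(p : ℕ) + 1, hP1n⟩ with hi₁
    set j : Fin (n + 1) := ⟨(p : ℕ) + 1, by omega⟩ with hj
    have hj1 : p.succAbove i₀ = j := by
      rw [Fin.succAbove_of_le_castSucc _ _ (by rw [Fin.le_def]; exact le_refl _)]
      exact Fin.ext rfl
    have hj2 : p'.succAbove i₁ = j := by
      rw [Fin.succAbove_of_castSucc_lt _ _ (by rw [Fin.lt_def]; exact hgap)]
      exact Fin.ext rfl
    have heq : v.succAbove (π i₀) = v'.succAbove (π i₁) := by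
      calc v.succAbove (π i₀) = ins π p v (p.succAbove i₀) := (ins_apply_succAbove π p v i₀).symm
      _ = ins π p' v' (p'.succAbove i₁) := by rw [hj1, hj2, h]
      _ = v'.succAbove (π i₁) := ins_apply_succAbove π p' v' i₁
    have hne : i₀ ≠ i₁ := by
      intro hc
      rw [Fin.ext_iff] at hc
      simp [hi₀, hi₁] at hc
    have hπne : (π i₀ : ℕ) ≠ (π i₁ : ℕ) := fun hc => hne (π.injective (Fin.ext hc))
    have hval : ((π i₀ : ℕ)) + 1 = (π i₁ : ℕ) ∨ ((π i₁ : ℕ)) + 1 = (π i₀ : ℕ) := by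
      have := congrArg (Fin.val) heq
      rw [val_succAbove, val_succAbove] at this
      split_ifs at this <;> omega
    exact no_two_interval hπ h4 hne (Or.inl rfl) hval
  · -- p' = p + 1 : Bad p v
    have hp' : (p' : ℕ) = (p : ℕ) + 1 := by omega
    apply hgood
    left
    refine ⟨i₀, Or.inl rfl, ?_⟩
    have := congrArg (Fin.val) h₁
    rw [val_succAbove] at this
    split_ifs at this <;> omega

lemma ins_eq_ins {π : Equiv.Perm (Fin n)} (hπ : IsSimple π) (h4 : 4 ≤ n)
    {p v p' v' : Fin (n + 1)} (hgood : ¬ Bad π p v) (hgood' : ¬ Bad π p' v')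
    (h : ins π p v = ins π p' v') : p = p' ∧ v = v' := by
  rcases lt_trichotomy ((p : ℕ)) ((p' : ℕ)) with hlt | heq | hlt
  · exact absurd (ins_inj_aux hπ h4 hlt hgood h) id
  · have hpp : p = p' := Fin.ext heq
    subst hpp
    refine ⟨rfl, ?_⟩
    calc v = ins π p v p := (ins_apply_self π p v).symm
    _ = ins π p v' p := by rw [h]
    _ = v' := ins_apply_self π p v'
  · exact absurd (ins_inj_aux hπ h4 hlt hgood' h.symm) id
lemma card_not_bad {π : Equiv.Perm (Fin n)} (hπ : IsSimple π) (h4 : 4 ≤ n) :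
    Nat.card {pv : Fin (n + 1) × Fin (n + 1) // ¬ Bad π pv.1 pv.2} = (n + 1) * (n - 3) := by
  classical
  rw [Nat.card_eq_fintype_card, Fintype.card_subtype]
  have hsplit := Finset.card_filter_add_card_filter_not
    (s := (Finset.univ : Finset (Fin (n + 1) × Fin (n + 1))))
    (p := fun pv => Bad π pv.1 pv.2)
  have htot : (Finset.univ : Finset (Fin (n + 1) × Fin (n + 1))).card = (n + 1) * (n + 1) := by
    simp
  -- the bad set splits
  have hBrw : (Finset.univ.filter (fun pv : Fin (n + 1) × Fin (n + 1) => Bad π pv.1 pv.2))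
      = (Finset.univ.filter (fun pv : Fin (n + 1) × Fin (n + 1) =>
          (∃ i : Fin n, ((pv.1 : ℕ) = (i : ℕ) ∨ (pv.1 : ℕ) = (i : ℕ) + 1) ∧
            ((pv.2 : ℕ) = ((π i : ℕ)) ∨ (pv.2 : ℕ) = ((π i : ℕ)) + 1)))) ∪
        (Finset.univ.filter (fun pv : Fin (n + 1) × Fin (n + 1) =>
          (((pv.1 : ℕ) = 0 ∨ (pv.1 : ℕ) = n) ∧ ((pv.2 : ℕ) = 0 ∨ (pv.2 : ℕ) = n)))) := by
    rw [← Finset.filter_or]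
    apply Finset.filter_congr
    intro pv _
    rfl
  -- count of type-1 bad pairs
  have hFbound1 : ∀ (x : Fin n × Bool × Bool), (x.1 : ℕ) + (if x.2.1 then 1 else 0) < n + 1 := by
    intro x; have := x.1.isLt; split <;> omega
  have hFbound2 : ∀ (x : Fin n × Bool × Bool), ((π x.1 : ℕ)) + (if x.2.2 then 1 else 0) < n + 1 := by
    intro x; have := (π x.1).isLt; split <;> omega
  set F : Fin n × Bool × Bool → Fin (n + 1) × Fin (n + 1) := fun x =>
    (⟨(x.1 : ℕ) + (if x.2.1 then 1 else 0), hFbound1 x⟩,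
     ⟨((π x.1 : ℕ)) + (if x.2.2 then 1 else 0), hFbound2 x⟩) with hF
  have hFinj : Function.Injective F := by
    rintro ⟨i, a, b⟩ ⟨i', a', b'⟩ hEq
    rw [hF, Prod.ext_iff, Fin.ext_iff, Fin.ext_iff] at hEq
    obtain ⟨h1, h2⟩ := hEq
    simp only at h1 h2
    by_cases hii : i = i'
    · subst hii
      cases a <;> cases a' <;> cases b <;> cases b' <;> simp_all
    · exfalso
      have hne : (i : ℕ) ≠ (i' : ℕ) := fun hc => hii (Fin.ext hc)
      have hπne : ((π i : ℕ)) ≠ ((π i' : ℕ)) := fun hc => hii (π.injective (Fin.ext hc))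
      have hposadj : (i : ℕ) + 1 = (i' : ℕ) ∨ (i' : ℕ) + 1 = (i : ℕ) := by
        cases a <;> cases a' <;> simp_all <;> omega
      have hvaladj : ((π i : ℕ)) + 1 = ((π i' : ℕ)) ∨ ((π i' : ℕ)) + 1 = ((π i : ℕ)) := by
        cases b <;> cases b' <;> simp_all <;> omega
      exact no_two_interval hπ h4 hii hposadj hvaladj
  have himage : (Finset.univ.filter (fun pv : Fin (n + 1) × Fin (n + 1) =>
      (∃ i : Fin n, ((pv.1 : ℕ) = (i : ℕ) ∨ (pv.1 : ℕ) = (i : ℕ) + 1) ∧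
        ((pv.2 : ℕ) = ((π i : ℕ)) ∨ (pv.2 : ℕ) = ((π i : ℕ)) + 1))))
      = Finset.univ.image F := by
    ext ⟨p, v⟩
    simp only [Finset.mem_filter, Finset.mem_univ, true_and, Finset.mem_image]
    constructor
    · rintro ⟨i, hp, hv⟩
      rcases hp with hp | hp <;> rcases hv with hv | hv
      · exact ⟨(i, false, false), by rw [hF, Prod.ext_iff]; constructor <;>
          (apply Fin.ext; simp; omega)⟩
      · exact ⟨(i, false, true), by rw [hF, Prod.ext_iff]; constructor <;>
          (apply Fin.ext; simp; omega)⟩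
      · exact ⟨(i, true, false), by rw [hF, Prod.ext_iff]; constructor <;>
          (apply Fin.ext; simp; omega)⟩
      · exact ⟨(i, true, true), by rw [hF, Prod.ext_iff]; constructor <;>
          (apply Fin.ext; simp; omega)⟩
    · rintro ⟨⟨i, a, b⟩, -, rfl⟩
      refine ⟨i, ?_, ?_⟩ <;> cases a <;> cases b <;> simp
  have hcard1 : (Finset.univ.filter (fun pv : Fin (n + 1) × Fin (n + 1) =>
      (∃ i : Fin n, ((pv.1 : ℕ) = (i : ℕ) ∨ (pv.1 : ℕ) = (i : ℕ) + 1) ∧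
        ((pv.2 : ℕ) = ((π i : ℕ)) ∨ (pv.2 : ℕ) = ((π i : ℕ)) + 1)))).card = 4 * n := by
    rw [himage, Finset.card_image_of_injective _ hFinj]
    simp [Fintype.card_prod]
    ring
  -- corner count
  have hL : ((Fin.last n : Fin (n + 1)) : ℕ) = n := rfl
  have h0L : (0 : Fin (n + 1)) ≠ Fin.last n := by
    intro hc
    have := congrArg Fin.val hc
    rw [hL] at this
    simp at this
    omega
  have hcorner : (Finset.univ.filter (fun pv : Fin (n + 1) × Fin (n + 1) =>
      (((pv.1 : ℕ) = 0 ∨ (pv.1 : ℕ) = n) ∧ ((pv.2 : ℕ) = 0 ∨ (pv.2 : ℕ) = n))))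
      = {((0 : Fin (n + 1)), (0 : Fin (n + 1))), (0, Fin.last n), (Fin.last n, 0),
          (Fin.last n, Fin.last n)} := by
    ext ⟨p, v⟩
    simp only [Finset.mem_filter, Finset.mem_univ, true_and, Finset.mem_insert,
      Finset.mem_singleton, Prod.ext_iff, Fin.ext_iff, hL, Fin.val_zero]
    omega
  have hcard2 : (Finset.univ.filter (fun pv : Fin (n + 1) × Fin (n + 1) =>
      (((pv.1 : ℕ) = 0 ∨ (pv.1 : ℕ) = n) ∧ ((pv.2 : ℕ) = 0 ∨ (pv.2 : ℕ) = n)))).card = 4 := by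
    rw [hcorner]
    rw [Finset.card_insert_of_notMem (by simp [Prod.ext_iff, h0L]),
      Finset.card_insert_of_notMem (by simp [Prod.ext_iff, h0L, h0L.symm]),
      Finset.card_insert_of_notMem (by simp [Prod.ext_iff, h0L, h0L.symm]),
      Finset.card_singleton]
  have hdisj : Disjoint (Finset.univ.filter (fun pv : Fin (n + 1) × Fin (n + 1) =>
      (∃ i : Fin n, ((pv.1 : ℕ) = (i : ℕ) ∨ (pv.1 : ℕ) = (i : ℕ) + 1) ∧
        ((pv.2 : ℕ) = ((π i : ℕ)) ∨ (pv.2 : ℕ) = ((π i : ℕ)) + 1))))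
      (Finset.univ.filter (fun pv : Fin (n + 1) × Fin (n + 1) =>
      (((pv.1 : ℕ) = 0 ∨ (pv.1 : ℕ) = n) ∧ ((pv.2 : ℕ) = 0 ∨ (pv.2 : ℕ) = n)))) := by
    rw [Finset.disjoint_left]
    rintro ⟨p, v⟩ h1 h2
    simp only [Finset.mem_filter, Finset.mem_univ, true_and] at h1 h2
    obtain ⟨i, hp, hv⟩ := h1
    obtain ⟨hcp, hcv⟩ := h2
    have hii := i.isLt
    have hπi := (π i).isLt
    exact not_simple_endpoint h4 (i := i) (by omega) (by omega) hπ
  have hbadcard : (Finset.univ.filter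
      (fun pv : Fin (n + 1) × Fin (n + 1) => Bad π pv.1 pv.2)).card = 4 * n + 4 := by
    rw [hBrw, Finset.card_union_of_disjoint hdisj, hcard1, hcard2]
  obtain ⟨m, rfl⟩ : ∃ m, n = m + 4 := ⟨n - 4, by omega⟩
  have hring : (m + 4 + 1) * (m + 4 + 1) =
      (m + 4 + 1) * (m + 4 - 3) + (4 * (m + 4) + 4) := by
    have : m + 4 - 3 = m + 1 := by omega
    rw [this]; ring
  omega
end SE

/-- For a simple permutation `π` of size `n ≥ 4`, the number of simple
permutations of size `n + 1` containing `π` as a pattern is `(n + 1)(n - 3)`. -/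
theorem card_simple_extensions {n : ℕ} (π : Equiv.Perm (Fin n))
    (h4 : 4 ≤ n) (hπ : IsSimple π) :
    Nat.card {σ : Equiv.Perm (Fin (n + 1)) // IsSimple σ ∧ IsPattern π σ} =
      (n + 1) * (n - 3) := by
  classical
  have hkey : Nat.card {σ : Equiv.Perm (Fin (n + 1)) // IsSimple σ ∧ IsPattern π σ}
      = Nat.card {pv : Fin (n + 1) × Fin (n + 1) // ¬ SE.Bad π pv.1 pv.2} := by
    apply Nat.card_congr
    apply Equiv.symm
    refine Equiv.ofBijective (fun pv => ⟨SE.ins π pv.1.1 pv.1.2,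
      SE.simple_of_not_bad hπ h4 pv.2, SE.pattern_ins π pv.1.1 pv.1.2⟩) ⟨?_, ?_⟩
    · rintro ⟨⟨p, v⟩, hg⟩ ⟨⟨p', v'⟩, hg'⟩ hEq
      have h := congrArg Subtype.val hEq
      obtain ⟨h1, h2⟩ := SE.ins_eq_ins hπ h4 hg hg' h
      apply Subtype.ext
      simp only [Prod.ext_iff]
      exact ⟨h1, h2⟩
    · rintro ⟨σ, hs, hp⟩
      obtain ⟨p, v, rfl⟩ := SE.eq_ins_of_pattern hp
      have hgood : ¬ SE.Bad π p v := fun hb => SE.not_simple_of_bad h4 hb hs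
      exact ⟨⟨(p, v), hgood⟩, rfl⟩
  rw [hkey, SE.card_not_bad hπ h4]
end
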